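/- arXiv:2405.10159 — 12 statements merged into one kernel-verified Lean document; each statement's English description precedes it below -/
import Mathlib

section
/- Let F be a field of prime characteristic p and let a ∈ F. Then the polynomial f = X^p - X - a ∈ F[X] is either irreducible over F or has a root in F. -/
/-!
Let `α` be a root of `f` in an algebraic closure. Every root `β` of `f` satisfies
`(β - α) ^ p = β - α`, so `β - α` lies in the prime field. If `g` is the minimal polynomial of `α`
and `d = deg g`, the sum of the roots of `g` is therefore `d • α` plus an element of `F`, while it
is also `-g.nextCoeff ∈ F`. So either `p ∣ d`, which forces `d = p` and `f = g` irreducible, or `d`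
is invertible in `F` and `α ∈ F`.
-/

open Polynomial

theorem Polynomial.monic_X_pow_sub_X_sub_C {R : Type*} [CommRing R] [Nontrivial R] {n : ℕ}
    (hn : 1 < n) (a : R) : (X ^ n - X - C a : R[X]).Monic := by
  rw [sub_sub]
  refine monic_X_pow_sub ?_
  rw [degree_X_add_C]
  exact_mod_cast hn

theorem Polynomial.natDegree_X_pow_sub_X_sub_C {R : Type*} [CommRing R] [Nontrivial R] {n : ℕ}
    (hn : 1 < n) (a : R) : (X ^ n - X - C a : R[X]).natDegree = n := by
  rw [natDegree_sub_C, natDegree_sub_eq_left_of_natDegree_lt] <;> simp [hn]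

section Field

variable {F K : Type*} [Field F] [Field K] [Algebra F K]

theorem Polynomial.Monic.irreducible_of_natDegree_le_minpoly {f : F[X]} (hf : f.Monic) {α : K}
    (hα : aeval α f = 0) (hdeg : f.natDegree ≤ (minpoly F α).natDegree) : Irreducible f := by
  have hαint : IsIntegral F α := ⟨f, hf, hα⟩
  rw [eq_of_monic_of_dvd_of_natDegree_le (minpoly.monic hαint) hf (minpoly.dvd F α hα) hdeg]
  exact minpoly.irreducible hαint

theorem IntermediateField.mem_bot_of_forall_root_sub_mem_bot {g : F[X]} (hg : g.Monic)
    (hsplit : (g.map (algebraMap F K)).Splits) (hdeg : (g.natDegree : F) ≠ 0) {α : K}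
    (hroots : ∀ β ∈ (g.map (algebraMap F K)).roots, β - α ∈ (⊥ : IntermediateField F K)) :
    α ∈ (⊥ : IntermediateField F K) := by
  set s := (g.map (algebraMap F K)).roots
  have hcard : Multiset.card s = g.natDegree := by
    rw [← hsplit.natDegree_eq_card_roots, natDegree_map]
  have hsum : s.sum ∈ (⊥ : IntermediateField F K) := by
    rw [← neg_neg s.sum, ← hsplit.nextCoeff_eq_neg_sum_roots_of_monic (hg.map _),
      nextCoeff_map (algebraMap F K).injective]
    exact neg_mem (algebraMap_mem _ _)
  have hshift : (s.map (· - α)).sum = s.sum - (g.natDegree : K) * α := by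
    simp [Multiset.sum_map_sub, hcard]
  have hdα : (g.natDegree : K) * α ∈ (⊥ : IntermediateField F K) := by
    rw [← sub_sub_cancel s.sum (_ * α), ← hshift]
    refine sub_mem hsum (multiset_sum_mem _ fun _ hx ↦ ?_)
    obtain ⟨β, hβ, rfl⟩ := Multiset.mem_map.mp hx
    exact hroots β hβ
  have hd : (g.natDegree : K) ≠ 0 := by
    rwa [← map_natCast (algebraMap F K), _root_.map_ne_zero]
  simpa [hd] using mul_mem (inv_mem (natCast_mem _ g.natDegree)) hdα

theorem sub_mem_bot_of_aeval_X_pow_sub_X_sub_C_eq_zero (p : ℕ) [Fact p.Prime] [CharP K p]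
    {a : F} {α β : K} (hα : aeval α (X ^ p - X - C a) = 0)
    (hβ : aeval β (X ^ p - X - C a) = 0) : β - α ∈ (⊥ : IntermediateField F K) := by
  have hprime : β - α ∈ (⊥ : Subfield K) := by
    rw [Subfield.mem_bot_iff_pow_eq_self K p, sub_pow_char]
    simp only [map_sub, map_pow, aeval_X, aeval_C] at hα hβ
    linear_combination hβ - hα
  exact (bot_le : ⊥ ≤ (⊥ : IntermediateField F K).toSubfield) hprime

end Field

theorem artin_schreier_irreducible_or_root {F : Type*} [Field F] (p : ℕ) (hp : p.Prime)
    [CharP F p] (a : F) :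
    Irreducible (X ^ p - X - C a : F[X]) ∨ ∃ x : F, x ^ p - x = a := by
  have : Fact p.Prime := ⟨hp⟩
  set f : F[X] := X ^ p - X - C a
  have hf : f.Monic := monic_X_pow_sub_X_sub_C hp.one_lt a
  have hfdeg : f.natDegree = p := natDegree_X_pow_sub_X_sub_C hp.one_lt a
  let K := AlgebraicClosure F
  have : CharP K p := charP_of_injective_algebraMap (algebraMap F K).injective p
  obtain ⟨α, hα⟩ := IsAlgClosed.exists_aeval_eq_zero K f
    (by rw [degree_eq_natDegree hf.ne_zero, hfdeg]; exact_mod_cast hp.ne_zero)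
  have hαint : IsIntegral F α := ⟨f, hf, hα⟩
  by_cases hd : ((minpoly F α).natDegree : F) = 0
  · rw [CharP.cast_eq_zero_iff F p] at hd
    exact .inl <| hf.irreducible_of_natDegree_le_minpoly hα
      (hfdeg ▸ Nat.le_of_dvd (minpoly.natDegree_pos hαint) hd)
  · have hconj : ∀ β ∈ ((minpoly F α).map (algebraMap F K)).roots,
        β - α ∈ (⊥ : IntermediateField F K) := by
      intro β hβ
      rw [mem_roots_map_of_injective (algebraMap F K).injective (minpoly.ne_zero hαint)] at hβ
      exact sub_mem_bot_of_aeval_X_pow_sub_X_sub_C_eq_zero p hα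
        (aeval_eq_zero_of_dvd_aeval_eq_zero (minpoly.dvd F α hα) hβ)
    obtain ⟨x, rfl⟩ := IntermediateField.mem_bot.mp <|
      IntermediateField.mem_bot_of_forall_root_sub_mem_bot (minpoly.monic hαint)
        (IsAlgClosed.splits _) hd hconj
    exact .inr ⟨x, (algebraMap F K).injective (by simpa [f, sub_eq_zero] using hα)⟩
end

section
/- Let F be a field of prime characteristic p, a ∈ F, and suppose f = X^p - X - a has no root in F. Let K = F[α] where α is a root of f. Then the minimal polynomial of α^(p-1) over F is X^p + (X-1)^(p-1) - a^(p-1) - 1. -/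
/-!
Write `α ^ p = α + a` and `β = α ^ (p - 1)`. Then `α * (β - 1) = a`, so `F⟮β⟯ = F⟮α⟯`.
Since `β ^ p - 1 = (β - 1) ^ p`, multiplying `β ^ p + (β - 1) ^ (p - 1) - a ^ (p - 1) - 1` by
`α ^ p` gives `a ^ (p - 1) * (a + α - α ^ p) = 0`; so `β` is a root of this monic polynomial of
degree `p`, and it remains to see `[F⟮α⟯ : F] = p`. The conjugates of `α` are among the `α + i`,
`i ∈ 𝔽_p`, so if the minimal polynomial of `α` had degree `0 < d < p`, the sum of its roots,
`d * α + (an element of 𝔽_p)`, would put `α` in `F`.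
-/

open Polynomial IntermediateField

section CharP

variable {K : Type*} [Field K] (p : ℕ) [Fact p.Prime] [CharP K p]

theorem splits_X_pow_sub_X : (X ^ p - X : K[X]).Splits := by
  simpa using (Subfield.splits_bot K p).map (Subfield.subtype ⊥)

theorem splits_X_pow_sub_X_sub_C {α c : K} (h : α ^ p - α = c) :
    (X ^ p - X - C c : K[X]).Splits := by
  have : (X ^ p - X - C c : K[X]) = (X ^ p - X : K[X]).comp (X - C α) := by
    rw [sub_comp, pow_comp, X_comp, sub_pow_char, ← C_pow, ← h, C_sub]
    ring
  rw [this]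
  exact (splits_X_pow_sub_X p).comp_X_sub_C α

end CharP

theorem natDegree_mul_mem_fieldRange_of_roots_sub_mem {F K : Type*} [Field F] [Field K]
    (φ : F →+* K) {q : F[X]} (hq : q.Monic) (hs : (q.map φ).Splits) {α : K}
    (h : ∀ r ∈ (q.map φ).roots, r - α ∈ φ.fieldRange) :
    (q.natDegree : K) * α ∈ φ.fieldRange := by
  have hsum : (q.map φ).roots.sum ∈ φ.fieldRange := by
    rw [← neg_neg (q.map φ).roots.sum, ← hs.nextCoeff_eq_neg_sum_roots_of_monic (hq.map φ),
      nextCoeff_map φ.injective]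
    exact neg_mem (RingHom.mem_fieldRange_self φ _)
  have hsub : ((q.map φ).roots.map (· - α)).sum ∈ φ.fieldRange :=
    Subfield.multiset_sum_mem _ _ fun x hx => by
      obtain ⟨r, hr, rfl⟩ := Multiset.mem_map.mp hx
      exact h r hr
  have hcard : (q.map φ).roots.card = q.natDegree := by
    rw [← hs.natDegree_eq_card_roots, natDegree_map]
  rw [Multiset.sum_map_sub, Multiset.map_const', Multiset.sum_replicate, hcard,
    nsmul_eq_mul] at hsub
  simpa using sub_mem hsum hsub

theorem natDegree_minpoly_of_pow_sub_self_eq {F K : Type*} [Field F] [Field K] [Algebra F K]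
    {p : ℕ} [Fact p.Prime] [CharP F p] {a : F} (hno : ∀ x : F, x ^ p - x ≠ a) {α : K}
    (hα : α ^ p - α = algebraMap F K a) :
    (minpoly F α).natDegree = p := by
  have hp : p.Prime := Fact.out
  have : CharP K p := charP_of_injective_algebraMap (algebraMap F K).injective p
  set f : F[X] := X ^ p - X - C a
  have hf_deg : f.natDegree = p := by
    rw [natDegree_sub_C, FiniteField.X_pow_card_sub_X_natDegree_eq F hp.one_lt]
  have hf0 : f ≠ 0 := ne_zero_of_natDegree_gt (hf_deg ▸ hp.pos)
  have hf_root : aeval α f = 0 := by simp [f, hα]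
  have hint : IsIntegral F α := IsAlgebraic.isIntegral ⟨f, hf0, hf_root⟩
  have hdvd : minpoly F α ∣ f := minpoly.dvd F α hf_root
  have hf_map : f.map (algebraMap F K) = X ^ p - X - C (algebraMap F K a) := by simp [f]
  have hsplits : ((minpoly F α).map (algebraMap F K)).Splits := by
    have := splits_X_pow_sub_X_sub_C p hα
    rw [← hf_map] at this
    exact this.of_dvd (Polynomial.map_ne_zero hf0) (Polynomial.map_dvd _ hdvd)
  have hroots : ∀ r ∈ ((minpoly F α).map (algebraMap F K)).roots,
      r - α ∈ (algebraMap F K).fieldRange := by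
    intro r hr
    have : aeval r f = 0 := by
      rw [aeval_def, eval₂_eq_eval_map]
      exact (isRoot_of_mem_roots hr).dvd (Polynomial.map_dvd _ hdvd)
    refine (bot_le : ⊥ ≤ (algebraMap F K).fieldRange)
      ((Subfield.mem_bot_iff_pow_eq_self K p).mpr ?_)
    simp only [f, map_sub, map_pow, aeval_X, aeval_C] at this
    rw [sub_pow_char]
    linear_combination this - hα
  have hmem := natDegree_mul_mem_fieldRange_of_roots_sub_mem _ (minpoly.monic hint) hsplits hroots
  refine le_antisymm (hf_deg ▸ natDegree_le_of_dvd hdvd hf0) (not_lt.mp fun hlt => ?_)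
  have hd : ((minpoly F α).natDegree : K) ≠ 0 := by
    rw [Ne, CharP.cast_eq_zero_iff K p]
    exact Nat.not_dvd_of_pos_of_lt (minpoly.natDegree_pos hint) hlt
  obtain ⟨x, hx⟩ : α ∈ (algebraMap F K).fieldRange := by
    simpa [hd] using
      Subfield.mul_mem _ (Subfield.inv_mem _ (natCast_mem _ (minpoly F α).natDegree)) hmem
  exact hno x ((algebraMap F K).injective (by rw [map_sub, map_pow, hx, hα]))

theorem natDegree_X_pow_add_X_sub_one_pow_pred {R : Type*} [CommRing R] [Nontrivial R] {p : ℕ}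
    (hp : p ≠ 0) (b : R) :
    (X ^ p + (X - 1) ^ (p - 1) - C b - 1 : R[X]).natDegree = p := by
  compute_degree!
  simp [hp, show p ≠ p - 1 by omega]

theorem monic_X_pow_add_X_sub_one_pow_pred {R : Type*} [CommRing R] {p : ℕ} (hp : p ≠ 0)
    (b : R) :
    (X ^ p + (X - 1) ^ (p - 1) - C b - 1 : R[X]).Monic := by
  monicity!
  simp [hp, show p ≠ p - 1 by omega]

theorem adjoin_pow_pred_eq_adjoin {F K : Type*} [Field F] [Field K] [Algebra F K] {p : ℕ}
    (hp : p ≠ 0) {a : F} (ha : a ≠ 0) {α : K} (hα : α ^ p - α = algebraMap F K a) :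
    F⟮α ^ (p - 1)⟯ = F⟮α⟯ := by
  set β := α ^ (p - 1)
  have hmul : α * (β - 1) = algebraMap F K a := by
    rw [← hα, mul_sub_one, ← pow_succ', Nat.sub_add_cancel (Nat.pos_of_ne_zero hp)]
  have hne : β - 1 ≠ 0 := fun h =>
    ha ((algebraMap F K).injective (by rw [map_zero, ← hmul, h, mul_zero]))
  refine le_antisymm (adjoin_simple_le_iff.mpr (pow_mem (mem_adjoin_simple_self F α) _)) ?_
  rw [adjoin_simple_le_iff, (eq_mul_inv_iff_mul_eq₀ hne).mpr hmul]
  exact mul_mem (IntermediateField.algebraMap_mem _ a)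
    (inv_mem (sub_mem (mem_adjoin_simple_self F β) (one_mem _)))

theorem aeval_pow_pred_of_pow_sub_self_eq {F K : Type*} [Field F] [Field K] [Algebra F K]
    {p : ℕ} [Fact p.Prime] [CharP K p] {a : F} {α : K} (hα0 : α ≠ 0)
    (hα : α ^ p - α = algebraMap F K a) :
    aeval (α ^ (p - 1)) (X ^ p + (X - 1) ^ (p - 1) - C (a ^ (p - 1)) - 1 : F[X]) = 0 := by
  obtain ⟨q, rfl⟩ : ∃ q, p = q + 1 := Nat.exists_eq_add_one.mpr (Fact.out : p.Prime).pos
  simp only [Nat.add_sub_cancel, map_sub, map_add, map_pow, aeval_X, aeval_C, map_one]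
  generalize algebraMap F K a = c at hα ⊢
  have hαγ : α * (α ^ q - 1) = c := by rw [← hα, mul_sub_one, ← pow_succ']
  have hγ : (α ^ q - 1) ^ (q + 1) = (α ^ q) ^ (q + 1) - 1 := by rw [sub_pow_char, one_pow]
  generalize α ^ q - 1 = γ at hαγ hγ ⊢
  have key : α ^ (q + 1) * (γ ^ (q + 1) + γ ^ q - c ^ q) = 0 := by
    have e : (α * γ) ^ q = c ^ q := by rw [hαγ]
    linear_combination (α * γ + α) * e + c ^ q * hαγ - c ^ q * hα
  have : γ ^ (q + 1) + γ ^ q - c ^ q = 0 :=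
    (mul_eq_zero.mp key).resolve_left (pow_ne_zero _ hα0)
  linear_combination this - hγ

theorem minpoly_pow_pred_of_artin_schreier_general {F K : Type*} [Field F] [Field K] [Algebra F K]
    (p : ℕ) (hp : p.Prime) [CharP F p] (a : F)
    (hno : ∀ x : F, x ^ p - x ≠ a)
    (α : K) (hα : α ^ p - α = algebraMap F K a) :
    minpoly F (α ^ (p - 1)) =
      X ^ p + (X - 1) ^ (p - 1) - C (a ^ (p - 1)) - 1 := by
  have : Fact p.Prime := ⟨hp⟩
  have : CharP K p := charP_of_injective_algebraMap (algebraMap F K).injective p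
  have ha : a ≠ 0 := fun h => hno 0 (by simp [h, hp.ne_zero])
  have hα0 : α ≠ 0 := by
    rintro rfl
    rw [zero_pow hp.ne_zero, sub_zero, eq_comm, map_eq_zero] at hα
    exact ha hα
  have hdeg : (minpoly F α).natDegree = p := natDegree_minpoly_of_pow_sub_self_eq hno hα
  have hint : IsIntegral F α :=
    minpoly.ne_zero_iff.mp (ne_zero_of_natDegree_gt (hdeg ▸ hp.pos))
  have hdeg' : (minpoly F (α ^ (p - 1))).natDegree = p := by
    rw [← adjoin.finrank (hint.pow _), adjoin_pow_pred_eq_adjoin hp.ne_zero ha hα,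
      adjoin.finrank hint, hdeg]
  refine (minpoly.unique_of_degree_le_degree_minpoly _ _
    (monic_X_pow_add_X_sub_one_pow_pred hp.ne_zero _)
    (aeval_pow_pred_of_pow_sub_self_eq hα0 hα) ?_).symm
  rw [degree_eq_natDegree (monic_X_pow_add_X_sub_one_pow_pred hp.ne_zero _).ne_zero,
    degree_eq_natDegree (minpoly.ne_zero (hint.pow _)), hdeg',
    natDegree_X_pow_add_X_sub_one_pow_pred hp.ne_zero]

theorem minpoly_pow_pred_of_artin_schreier {F K : Type*} [Field F] [Field K] [Algebra F K]
    (p : ℕ) (hp : p.Prime) [CharP F p] (a : F)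
    (hno : ∀ x : F, x ^ p - x ≠ a)
    (α : K) (hα : α ^ p - α = algebraMap F K a)
    (hadj : Algebra.adjoin F {α} = ⊤) :
    minpoly F (α ^ (p - 1)) =
      X ^ p + (X - 1) ^ (p - 1) - C (a ^ (p - 1)) - 1 :=
  minpoly_pow_pred_of_artin_schreier_general p hp a hno α hα
end

section
/- Let F be a field of prime characteristic p, a ∈ F, and suppose X^p - X - a has no root in F. Let K = F[α] with α^p - α = a. Then the trace of α^(p-1) from K to F equals -1. -/
/-!
The roots of `X ^ p - X - a` are the translates of `α` by the prime field, so the coefficient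
of `X ^ (d - 1)` in a monic factor of degree `d` over `F` is `-(d • α + t)` with `t` in the
prime field. Since `α ∉ F`, this forces `p ∣ d`: the polynomial is irreducible and
`1, α, …, α ^ (p - 1)` is a basis of `K`. Multiplication by `α ^ (p - 1)` sends `1` to
`α ^ (p - 1)` and `α ^ j`, `j ≥ 1`, to `α ^ j + a α ^ (j - 1)`, so its trace is `p - 1 = -1`.
-/

open Polynomial

theorem Algebra.trace_pow_of_pow_succ_eq_add {R S : Type*} [CommRing R] [CommRing S]
    [Algebra R S] {n : ℕ} (hn : n ≠ 0) (b : Module.Basis (Fin (n + 1)) R S) {x : S}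
    (hb : ∀ i, b i = x ^ (i : ℕ)) {c : R} (hx : x ^ (n + 1) = x + algebraMap R S c) :
    Algebra.trace R S (x ^ n) = n := by
  have diag_zero : Algebra.leftMulMatrix b (x ^ n) 0 0 = 0 := by
    have : x ^ n * b 0 = b (Fin.last n) := by simp [hb]
    rw [Algebra.leftMulMatrix_eq_repr_mul, this, b.repr_self,
      Finsupp.single_eq_of_ne (Fin.ext_iff.not.2 (by simpa using Ne.symm hn))]
  have diag_succ (j : Fin n) : Algebra.leftMulMatrix b (x ^ n) j.succ j.succ = 1 := by
    have : x ^ n * b j.succ = b j.succ + c • b j.castSucc := by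
      rw [hb, hb, Fin.val_succ, Fin.val_castSucc, Algebra.smul_def,
        show x ^ n * x ^ ((j : ℕ) + 1) = x ^ (j : ℕ) * x ^ (n + 1) by ring, hx]
      ring
    rw [Algebra.leftMulMatrix_eq_repr_mul, this, map_add, map_smul, b.repr_self, b.repr_self,
      Finsupp.add_apply, Finsupp.smul_apply, Finsupp.single_eq_same,
      Finsupp.single_eq_of_ne (Fin.castSucc_lt_succ (i := j)).ne', smul_zero, add_zero]
  classical
  rw [Algebra.trace_eq_matrix_trace b, Matrix.trace, Fin.sum_univ_succ]
  simp only [Matrix.diag, diag_zero, diag_succ, Finset.sum_const, Finset.card_univ,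
    Fintype.card_fin, zero_add, nsmul_one]

noncomputable def artinSchreierPoly {R : Type*} [CommRing R] (p : ℕ) (a : R) : R[X] :=
  X ^ p - X - C a

section ArtinSchreierPoly

variable {R S : Type*} [CommRing R] [CommRing S] {p : ℕ}

theorem artinSchreierPoly_monic [Nontrivial R] (hp : 1 < p) (a : R) :
    (artinSchreierPoly p a).Monic := by
  rw [artinSchreierPoly, sub_sub]
  exact monic_X_pow_sub (by rw [degree_X_add_C]; exact_mod_cast hp)

theorem natDegree_artinSchreierPoly [Nontrivial R] (hp : 1 < p) (a : R) :
    (artinSchreierPoly p a).natDegree = p := by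
  rw [artinSchreierPoly, sub_sub, natDegree_sub_eq_left_of_natDegree_lt] <;> simp [hp]

theorem map_artinSchreierPoly (f : R →+* S) (a : R) :
    (artinSchreierPoly p a).map f = artinSchreierPoly p (f a) := by
  simp [artinSchreierPoly]

variable [Algebra R S]

theorem aeval_artinSchreierPoly {a : R} {α : S} (hα : α ^ p - α = algebraMap R S a) :
    aeval α (artinSchreierPoly p a) = 0 := by
  simp [artinSchreierPoly, hα]

theorem isIntegral_of_pow_sub_self_eq_algebraMap [Nontrivial R] (hp : 1 < p) {a : R} {α : S}
    (hα : α ^ p - α = algebraMap R S a) : IsIntegral R α :=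
  ⟨_, artinSchreierPoly_monic hp a, aeval_artinSchreierPoly hα⟩

end ArtinSchreierPoly

section ArtinSchreier

variable {K : Type*} [Field K] {p : ℕ} [Fact p.Prime] [CharP K p]

theorem artinSchreierPoly_eq_comp {α c : K} (hα : α ^ p - α = c) :
    artinSchreierPoly p c = (X ^ p - X : K[X]).comp (X - C α) := by
  rw [artinSchreierPoly, sub_comp, pow_comp, X_comp, sub_pow_char, ← C_pow, ← hα, C_sub]
  ring

theorem artinSchreierPoly_splits {α c : K} (hα : α ^ p - α = c) :
    (artinSchreierPoly p c).Splits := by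
  rw [artinSchreierPoly_eq_comp hα]
  simpa using ((Subfield.splits_bot K p).map (⊥ : Subfield K).subtype).comp_X_sub_C α

theorem sub_mem_bot_of_isRoot_artinSchreierPoly {α c r : K} (hα : α ^ p - α = c)
    (hr : (artinSchreierPoly p c).IsRoot r) : r - α ∈ (⊥ : Subfield K) := by
  rw [artinSchreierPoly_eq_comp hα, IsRoot, eval_comp] at hr
  rw [Subfield.mem_bot_iff_pow_eq_self K p]
  simpa [sub_eq_zero] using hr

variable {F : Type*} [Field F] [Algebra F K]

theorem natDegree_nsmul_mem_fieldRange {a : F} {α : K} (hα : α ^ p - α = algebraMap F K a)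
    {g : F[X]} (hg : g.Monic) (hgf : g ∣ artinSchreierPoly p a) :
    g.natDegree • α ∈ (algebraMap F K).fieldRange := by
  set G := g.map (algebraMap F K)
  have hf0 : artinSchreierPoly p (algebraMap F K a) ≠ 0 :=
    (artinSchreierPoly_monic (Fact.out : p.Prime).one_lt _).ne_zero
  have hGf : G ∣ artinSchreierPoly p (algebraMap F K a) :=
    map_artinSchreierPoly (algebraMap F K) a ▸ Polynomial.map_dvd _ hgf
  have hG : G.Splits := (artinSchreierPoly_splits hα).of_dvd hf0 hGf
  have hshift : (G.roots.map (· - α)).sum ∈ (⊥ : Subfield K) := by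
    refine Subfield.multiset_sum_mem _ _ fun _ hx => ?_
    obtain ⟨r, hr, rfl⟩ := Multiset.mem_map.1 hx
    exact sub_mem_bot_of_isRoot_artinSchreierPoly hα
      ((mem_roots hf0).1 (Multiset.mem_of_le (roots.le_of_dvd hf0 hGf) hr))
  have hsum : G.roots.sum = (G.roots.map (· - α)).sum + g.natDegree • α := by
    rw [Multiset.sum_map_sub, Multiset.map_id', Multiset.map_const', Multiset.sum_replicate,
      splits_iff_card_roots.1 hG, natDegree_map, sub_add_cancel]
  have hnext : G.roots.sum = algebraMap F K (-g.nextCoeff) := by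
    rw [map_neg, ← nextCoeff_map (algebraMap F K).injective,
      hG.nextCoeff_eq_neg_sum_roots_of_monic (hg.map _), neg_neg]
  rw [eq_sub_of_add_eq' hsum.symm, hnext]
  exact sub_mem (RingHom.mem_fieldRange_self _ _)
    (bot_le (a := (algebraMap F K).fieldRange) hshift)

theorem natDegree_minpoly_of_pow_sub_self_eq_algebraMap {a : F} (hno : ∀ x : F, x ^ p - x ≠ a)
    {α : K} (hα : α ^ p - α = algebraMap F K a) : (minpoly F α).natDegree = p := by
  have hp : p.Prime := Fact.out
  have hint := isIntegral_of_pow_sub_self_eq_algebraMap hp.one_lt hα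
  have hdvd := minpoly.dvd F α (aeval_artinSchreierPoly hα)
  have hd_le : (minpoly F α).natDegree ≤ p := natDegree_artinSchreierPoly hp.one_lt a ▸
    natDegree_le_of_dvd hdvd (artinSchreierPoly_monic hp.one_lt a).ne_zero
  have hp_dvd : p ∣ (minpoly F α).natDegree := by
    by_contra hnd
    have hd : ((minpoly F α).natDegree : K) ≠ 0 := by rwa [Ne, CharP.cast_eq_zero_iff K p]
    obtain ⟨x, hx⟩ : α ∈ (algebraMap F K).fieldRange := by
      have := natDegree_nsmul_mem_fieldRange hα (minpoly.monic hint) hdvd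
      rw [nsmul_eq_mul] at this
      simpa [hd] using mul_mem (inv_mem (natCast_mem _ (minpoly F α).natDegree)) this
    exact hno x ((algebraMap F K).injective (by rw [map_sub, map_pow, hx, hα]))
  exact le_antisymm hd_le (Nat.le_of_dvd (minpoly.natDegree_pos hint) hp_dvd)

end ArtinSchreier

theorem trace_pow_pred_of_artin_schreier {F K : Type*} [Field F] [Field K] [Algebra F K]
    (p : ℕ) (hp : p.Prime) [CharP F p] (a : F)
    (hno : ∀ x : F, x ^ p - x ≠ a)
    (α : K) (hα : α ^ p - α = algebraMap F K a)
    (hadj : Algebra.adjoin F {α} = ⊤) :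
    Algebra.trace F K (α ^ (p - 1)) = -1 := by
  have : Fact p.Prime := ⟨hp⟩
  have : CharP K p := charP_of_injective_algebraMap (algebraMap F K).injective p
  let pb := PowerBasis.ofAdjoinEqTop (isIntegral_of_pow_sub_self_eq_algebraMap hp.one_lt hα) hadj
  have hdim : pb.dim = p - 1 + 1 := by
    rw [PowerBasis.ofAdjoinEqTop_dim, natDegree_minpoly_of_pow_sub_self_eq_algebraMap hno hα,
      Nat.sub_add_cancel hp.one_le]
  have hαp : α ^ (p - 1 + 1) = α + algebraMap F K a := by
    rw [Nat.sub_add_cancel hp.one_le, ← hα, add_sub_cancel]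
  have hbasis (i : Fin (p - 1 + 1)) : pb.basis.reindex (finCongr hdim) i = α ^ (i : ℕ) := by
    rw [Module.Basis.reindex_apply, pb.basis_eq_pow]
    rfl
  rw [Algebra.trace_pow_of_pow_succ_eq_add (Nat.sub_ne_zero_of_lt hp.one_lt) _ hbasis hαp,
    Nat.cast_pred hp.pos, CharP.cast_eq_zero, zero_sub]
end

section
/- Let d > 1 be a positive divisor of N_i = (p^(p^(i+1)) - 1)/(p^(p^i) - 1). Then the multiplicative order of p modulo d is exactly p^(i+1). -/
theorem orderOf_p_mod_divisor_of_N (p : ℕ) (hp : p.Prime) (i d : ℕ) (hd : 1 < d)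
    (hdvd : d ∣ ∑ j ∈ Finset.range p, (p ^ p ^ i) ^ j) :
    orderOf (p : ZMod d) = p ^ (i + 1) := by
  have hdz : NeZero d := ⟨by omega⟩
  have hnt : Nontrivial (ZMod d) := ZMod.nontrivial_iff.mpr (by omega)
  have hsum : (∑ j ∈ Finset.range p, ((p : ZMod d) ^ p ^ i) ^ j) = 0 := by
    have h := (ZMod.natCast_eq_zero_iff _ d).mpr hdvd
    push_cast at h
    exact h
  have hq : ((p : ZMod d) ^ p ^ i) ^ p = 1 := by
    have h := geom_sum_mul ((p : ZMod d) ^ p ^ i) p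
    rw [hsum, zero_mul] at h
    linear_combination -h
  have hpow : (p : ZMod d) ^ p ^ (i + 1) = 1 := by
    rw [pow_succ, pow_mul]; exact hq
  have hord : orderOf (p : ZMod d) ∣ p ^ (i + 1) := orderOf_dvd_of_pow_eq_one hpow
  obtain ⟨k, hk, hke⟩ := (Nat.dvd_prime_pow hp).mp hord
  rcases eq_or_lt_of_le hk with h | h
  · rw [hke, h]
  · exfalso
    have hq1 : (p : ZMod d) ^ p ^ i = 1 := by
      have he : p ^ i = p ^ k * p ^ (i - k) := by
        rw [← pow_add]; congr 1; omega
      rw [he, pow_mul, ← hke, pow_orderOf_eq_one, one_pow]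
    rw [Finset.sum_congr rfl (fun j _ => by rw [hq1, one_pow])] at hsum
    simp only [Finset.sum_const, Finset.card_range, nsmul_eq_mul, mul_one] at hsum
    rw [hsum, zero_pow (pow_ne_zero _ hp.pos.ne')] at hpow
    exact zero_ne_one hpow
end

section
/- If q is a prime divisor of N_i = (p^(p^(i+1)) - 1)/(p^(p^i) - 1), then q ≡ 1 (mod p^(i+1)). -/
theorem prime_divisor_of_N_cong_one (p : ℕ) (hp : p.Prime) (i : ℕ) (q : ℕ) (hq : q.Prime)
    (hdvd : q ∣ ∑ j ∈ Finset.range p, (p ^ p ^ i) ^ j) :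
    q ≡ 1 [MOD p ^ (i + 1)] := by
  haveI : Fact q.Prime := ⟨hq⟩
  -- the sum is ≡ 1 mod p, so q ≠ p
  have hqp : q ≠ p := by
    rintro rfl
    have h0 : ((∑ j ∈ Finset.range q, (q ^ q ^ i) ^ j : ℕ) : ZMod q) = 0 :=
      (ZMod.natCast_eq_zero_iff _ _).mpr hdvd
    push_cast at h0
    have hp0 : (q : ZMod q) = 0 := ZMod.natCast_self q
    rw [hp0] at h0
    have : ∀ j ∈ Finset.range q, ((0 : ZMod q) ^ q ^ i) ^ j = if j = 0 then 1 else 0 := by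
      intro j hj
      rw [zero_pow (Nat.pos_of_ne_zero (pow_ne_zero i hq.ne_zero)).ne']
      by_cases h : j = 0 <;> simp [h]
    rw [Finset.sum_congr rfl this, Finset.sum_ite_eq' _ 0] at h0
    simp [hq.pos] at h0
  -- work in ZMod q
  set x : ZMod q := (p : ZMod q) ^ p ^ i with hx
  have hsum : ∑ j ∈ Finset.range p, x ^ j = 0 := by
    have h0 : ((∑ j ∈ Finset.range p, (p ^ p ^ i) ^ j : ℕ) : ZMod q) = 0 :=
      (ZMod.natCast_eq_zero_iff _ _).mpr hdvd
    push_cast at h0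
    exact h0
  have hxp : x ^ p = 1 := by
    have := geom_sum_mul x p
    rw [hsum, zero_mul] at this
    exact sub_eq_zero.mp this.symm
  have hpow : (p : ZMod q) ^ p ^ (i + 1) = 1 := by
    rw [pow_succ, pow_mul]; exact hxp
  have hne : (p : ZMod q) ≠ 0 := by
    rw [Ne, ZMod.natCast_eq_zero_iff]
    intro h
    exact hqp ((Nat.prime_dvd_prime_iff_eq hq hp).mp h)
  have hord : orderOf (p : ZMod q) ∣ p ^ (i + 1) := orderOf_dvd_of_pow_eq_one hpow
  have hnord : ¬ orderOf (p : ZMod q) ∣ p ^ i := by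
    intro h
    have hx1 : x = 1 := orderOf_dvd_iff_pow_eq_one.mp h
    rw [hx1] at hsum
    simp at hsum
    exact hne hsum
  have heq : orderOf (p : ZMod q) = p ^ (i + 1) := by
    obtain ⟨k, hk, hke⟩ := (Nat.dvd_prime_pow hp).mp hord
    rcases Nat.lt_or_ge k (i + 1) with h | h
    · exact absurd (hke ▸ pow_dvd_pow p (Nat.lt_succ_iff.mp h)) hnord
    · rw [hke, le_antisymm hk h]
  have hdvd1 : p ^ (i + 1) ∣ q - 1 := by
    rw [← heq]
    exact ZMod.orderOf_dvd_card_sub_one hne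
  have h1q : 1 ≤ q := hq.one_le
  exact ((Nat.modEq_iff_dvd' h1q).mpr hdvd1).symm
end

section
/- For every i ≥ 0, gcd(N_i - (p^(p^i) - 1), N_0 N_1 ⋯ N_i) = 1. -/
/-!
Write `q = p ^ p ^ i` and `N = ∑_{j<p} q ^ j`. Every power of `q` is `1` modulo `q - 1`, so
`N ≡ p [MOD q - 1]`, and `p` is prime to `q - 1` because `p ∣ q`. Hence `N`, and with it
`N - (q - 1)`, is prime to `q - 1`, and then `N - (q - 1)` is also prime to
`N = (N - (q - 1)) + (q - 1)`. The earlier factors divide `q - 1`, since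
`N_k ∣ p ^ p ^ (k + 1) - 1 ∣ p ^ p ^ i - 1` for `k < i`.
-/

open Finset

namespace Nat

theorem geomSum_modEq_card {x m : ℕ} (h : x ≡ 1 [MOD m]) (n : ℕ) :
    ∑ j ∈ range n, x ^ j ≡ n [MOD m] :=
  (ModEq.sum fun j _ => by simpa using h.pow j).trans (by simp [ModEq.refl])

theorem coprime_geomSum_sub_one {x n : ℕ} (hx : 1 ≤ x) (hn : Coprime n (x - 1)) :
    Coprime (∑ j ∈ range n, x ^ j) (x - 1) := by
  rwa [Coprime, (geomSum_modEq_card (modEq_sub hx) n).gcd_eq]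

theorem self_le_geomSum {x n : ℕ} (hn : 1 < n) : x ≤ ∑ j ∈ range n, x ^ j := by
  simpa using single_le_sum (fun j _ => Nat.zero_le (x ^ j)) (mem_range.mpr hn)

theorem geomSum_dvd_pow_sub_one (x n : ℕ) : ∑ j ∈ range n, x ^ j ∣ x ^ n - 1 := by
  rcases x with _ | m
  · rcases n with _ | n <;> simp
  · exact Dvd.intro m (Nat.eq_sub_of_add_eq (geom_sum_mul_add m n))

theorem geomSum_pow_pow_dvd_pow_pow_sub_one (b n : ℕ) {k i : ℕ} (hki : k < i) :
    ∑ j ∈ range n, (b ^ n ^ k) ^ j ∣ b ^ n ^ i - 1 := by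
  refine (geomSum_dvd_pow_sub_one _ n).trans ?_
  rw [← pow_mul, ← pow_succ]
  exact pow_sub_one_dvd_pow_sub_one b (pow_dvd_pow n hki)

end Nat

theorem gcd_N_sub_with_prod_N (p : ℕ) (hp : p.Prime) (i : ℕ) :
    Nat.gcd ((∑ j ∈ Finset.range p, (p ^ p ^ i) ^ j) - (p ^ p ^ i - 1))
      (∏ k ∈ Finset.range (i + 1), ∑ j ∈ Finset.range p, (p ^ p ^ k) ^ j) = 1 := by
  set q := p ^ p ^ i
  set N := ∑ j ∈ range p, q ^ j
  have hq : 1 ≤ q := Nat.one_le_pow _ _ hp.pos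
  have hpq : Nat.Coprime p (q - 1) :=
    ((Nat.coprime_self_sub_right hq).mpr (Nat.coprime_one_right q)).coprime_dvd_left
      (dvd_pow_self p (pow_ne_zero i hp.ne_zero))
  have hN : Nat.Coprime N (q - 1) := Nat.coprime_geomSum_sub_one hq hpq
  have hle : q - 1 ≤ N := (Nat.sub_le q 1).trans (Nat.self_le_geomSum hp.one_lt)
  have hA_q : Nat.Coprime (N - (q - 1)) (q - 1) := (Nat.coprime_sub_self_left hle).mpr hN
  have hA_N : Nat.Coprime (N - (q - 1)) N := (Nat.coprime_self_sub_left hle).mpr hN.symm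
  refine Nat.Coprime.prod_right fun k hk => ?_
  rcases (mem_range_succ_iff.mp hk).lt_or_eq with hki | rfl
  · exact hA_q.coprime_dvd_right (Nat.geomSum_pow_pow_dvd_pow_pow_sub_one p p hki)
  · exact hA_N
end

section
/- In the Artin-Schreier tower over F_p, for every i ≥ -1 one has tr_{L_i/F_p}(a_i) = (-1)^(i+1). In particular each extension L_{i+1}/L_i has degree p. -/
/-!
Let `E` be a finite field of characteristic `p` with `q` elements, and let `θ ^ p - θ = b` with
`b ∈ E`. Iterating Frobenius gives `θ ^ q = θ + t` with `t = tr_{E/𝔽_p}(b) ∈ 𝔽_p`, hence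
`θ ^ (q ^ m) = θ + m t`. If `t ≠ 0` and `d = [E(θ) : E]`, then `θ ^ (q ^ d) = θ` forces `p ∣ d`,
while `d ≤ p` as `θ` is a root of `X ^ p - X - b`. So `d = p`, and the conjugates of `θ` over `E` are the `θ + k`, `k ∈ 𝔽_p`. Consequently
`tr_{E(θ)/E}(θ ^ (p - 1)) = ∑_k (θ + k) ^ (p - 1) = -1`, because `∑_k k ^ m` vanishes for
`0 ≤ m < p - 1` and equals `-1` for `m = p - 1`. By transitivity of the trace,
`tr_{E(θ)/𝔽_p}(b θ ^ (p - 1)) = -tr_{E/𝔽_p}(b)`. In the tower, `a_{i+1} = a_i c_{i+1} ^ (p - 1)`,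
so induction starting from `a_{-1} = 1` gives the degrees and the traces.
-/

open Polynomial IntermediateField

variable {p : ℕ}

theorem ZMod.sum_natCast_range {M : Type*} [AddCommMonoid M] (n : ℕ) [NeZero n]
    (f : ZMod n → M) : ∑ i ∈ Finset.range n, f i = ∑ k : ZMod n, f k :=
  Finset.sum_nbij' (↑) ZMod.val (by simp) (by simp [ZMod.val_lt])
    (fun i hi => ZMod.val_cast_of_lt (Finset.mem_range.mp hi)) (by simp) (by simp)

theorem ZMod.sum_pow_card_sub_one [hp : Fact p.Prime] : ∑ k : ZMod p, k ^ (p - 1) = -1 := by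
  simp [ZMod.pow_card_sub_one, Finset.sum_ite, Finset.filter_ne', Nat.cast_sub hp.out.one_le]

section CharP

variable {R : Type*} [CommRing R]

theorem pow_char_pow_eq_add_sum [Fact p.Prime] [CharP R p] {θ b : R} (h : θ ^ p = θ + b)
    (m : ℕ) : θ ^ p ^ m = θ + ∑ j ∈ Finset.range m, b ^ p ^ j := by
  induction m with
  | zero => simp
  | succ m ih =>
    rw [pow_succ, pow_mul, ih, add_pow_char, sum_pow_char, h, Finset.sum_range_succ']
    simp only [← pow_mul, ← pow_succ, pow_zero, pow_one]
    ring

theorem pow_pow_pow_eq_add_algebraMap_mul [Fact p.Prime] [Nontrivial R] [Algebra (ZMod p) R]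
    {θ : R} {s : ZMod p} {n : ℕ} (h : θ ^ p ^ n = θ + algebraMap (ZMod p) R s) (m : ℕ) :
    θ ^ (p ^ n) ^ m = θ + algebraMap (ZMod p) R (m * s) := by
  have := charP_of_injective_algebraMap' (ZMod p) (A := R) p
  induction m with
  | zero => simp
  | succ m ih =>
    rw [pow_succ, pow_mul, ih, add_pow_char_pow, h, ← map_pow, ZMod.pow_card_pow, add_assoc,
      ← map_add, Nat.cast_succ, add_one_mul, add_comm s]

theorem sum_add_algebraMap_pow_sub_one [hp : Fact p.Prime] [Algebra (ZMod p) R] (x : R) :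
    ∑ k : ZMod p, (x + algebraMap (ZMod p) R k) ^ (p - 1) = -1 := by
  have hvanish : ∀ m ∈ Finset.range (p - 1 + 1), m ≠ 0 →
      x ^ m * algebraMap (ZMod p) R (∑ k : ZMod p, k ^ (p - 1 - m)) * ((p - 1).choose m) = 0 := by
    intro m _ hm
    rw [FiniteField.sum_pow_lt_card_sub_one _ _ (by have := hp.out.two_le; rw [ZMod.card]; omega)]
    simp
  calc ∑ k : ZMod p, (x + algebraMap (ZMod p) R k) ^ (p - 1)
      = ∑ m ∈ Finset.range (p - 1 + 1),
          x ^ m * algebraMap (ZMod p) R (∑ k : ZMod p, k ^ (p - 1 - m)) * ((p - 1).choose m) := by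
        simp_rw [add_pow, ← map_pow, map_sum, Finset.mul_sum, Finset.sum_mul]
        exact Finset.sum_comm
    _ = -1 := by
        rw [Finset.sum_eq_single 0 hvanish (by simp), Nat.sub_zero, ZMod.sum_pow_card_sub_one]
        simp

end CharP

/-- The carriers coincide; transporting `finrank` and `trace` along this equivalence is much cheaper
than letting Lean unify the two `K`-algebra structures. -/
def IntermediateField.restrictScalarsAlgEquiv {K L L' : Type*} [Field K] [Field L] [Field L']
    [Algebra K L] [Algebra L' L] [Algebra K L'] [IsScalarTower K L' L]
    (E : IntermediateField L' L) : E.restrictScalars K ≃ₐ[K] E where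
  toEquiv := Equiv.refl _
  map_mul' _ _ := rfl
  map_add' _ _ := rfl
  commutes' _ := rfl

namespace ArtinSchreier

section Polynomial

variable {E Ω : Type*} [CommRing E] [Ring Ω] [Algebra E Ω] {θ : Ω} {b : E}

theorem aeval_eq_zero (hθ : θ ^ p - θ = algebraMap E Ω b) :
    aeval θ (X ^ p - (X + C b)) = 0 := by
  simp [← hθ]

variable [Nontrivial E]

theorem monic (hp : 1 < p) (b : E) : (X ^ p - (X + C b)).Monic :=
  monic_X_pow_sub (by rw [degree_X_add_C]; exact_mod_cast hp)

theorem natDegree_eq (hp : 1 < p) (b : E) : (X ^ p - (X + C b)).natDegree = p := by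
  rw [natDegree_sub_eq_left_of_natDegree_lt] <;> rw [natDegree_X_pow]
  rwa [natDegree_X_add_C]

theorem isIntegral (hp : 1 < p) (hθ : θ ^ p - θ = algebraMap E Ω b) : IsIntegral E θ :=
  ⟨_, monic hp b, aeval_eq_zero hθ⟩

theorem natDegree_minpoly_le (hp : 1 < p) (hθ : θ ^ p - θ = algebraMap E Ω b) :
    (minpoly E θ).natDegree ≤ p :=
  natDegree_eq hp b ▸ natDegree_le_natDegree (minpoly.min E θ (monic hp b) (aeval_eq_zero hθ))

end Polynomial

variable [hp : Fact p.Prime] {E : Type*} [Field E] [Finite E] [Algebra (ZMod p) E] {b : E}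

theorem pow_natCard_pow_eq_add_trace {L : Type*} [Field L] [Algebra (ZMod p) L] [Algebra E L]
    [IsScalarTower (ZMod p) E L] {θ : L} (hθ : θ ^ p - θ = algebraMap E L b) (m : ℕ) :
    θ ^ Nat.card E ^ m = θ + algebraMap (ZMod p) L (m * Algebra.trace (ZMod p) E b) := by
  have := charP_of_injective_algebraMap' (ZMod p) (A := L) p
  have := Module.finite_of_finite (ZMod p) (M := E)
  rw [← FiniteField.pow_finrank_eq_natCard p E]
  refine pow_pow_pow_eq_add_algebraMap_mul ?_ m
  rw [pow_char_pow_eq_add_sum (eq_add_of_sub_eq' hθ), IsScalarTower.algebraMap_apply (ZMod p) E L,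
    FiniteField.algebraMap_trace_eq_sum_pow, Nat.card_zmod, map_sum]
  simp_rw [map_pow]

variable {Ω : Type*} [Field Ω] [Algebra (ZMod p) Ω] [Algebra E Ω] [IsScalarTower (ZMod p) E Ω]
  {θ : Ω}

theorem finrank_adjoin (hθ : θ ^ p - θ = algebraMap E Ω b)
    (hb : Algebra.trace (ZMod p) E b ≠ 0) : Module.finrank E E⟮θ⟯ = p := by
  have hint := isIntegral hp.out.one_lt hθ
  have := adjoin.finiteDimensional hint
  have := Module.finite_of_finite E (M := E⟮θ⟯)
  have := Fintype.ofFinite E⟮θ⟯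
  have hfix := FiniteField.pow_card (AdjoinSimple.gen E θ)
  rw [Fintype.card_eq_nat_card, Module.natCard_eq_pow_finrank (K := E),
    pow_natCard_pow_eq_add_trace (Subtype.ext hθ), add_eq_left, map_eq_zero, mul_eq_zero,
    or_iff_left hb, ZMod.natCast_eq_zero_iff] at hfix
  exact le_antisymm ((adjoin.finrank hint).trans_le (natDegree_minpoly_le hp.out.one_lt hθ))
    (Nat.le_of_dvd Module.finrank_pos hfix)

theorem trace_gen_pow_sub_one (hθ : θ ^ p - θ = algebraMap E Ω b)
    (hb : Algebra.trace (ZMod p) E b ≠ 0) :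
    Algebra.trace E E⟮θ⟯ (AdjoinSimple.gen E θ ^ (p - 1)) = -1 := by
  have := adjoin.finiteDimensional (isIntegral hp.out.one_lt hθ)
  have := Module.finite_of_finite E (M := E⟮θ⟯)
  set x := AdjoinSimple.gen E θ
  have hx : x ^ p - x = algebraMap E E⟮θ⟯ b := Subtype.ext hθ
  apply (algebraMap E E⟮θ⟯).injective
  rw [FiniteField.algebraMap_trace_eq_sum_pow, finrank_adjoin hθ hb, map_neg, map_one]
  simp_rw [← pow_mul, mul_comm (p - 1), pow_mul, pow_natCard_pow_eq_add_trace hx]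
  rw [ZMod.sum_natCast_range p (fun k => (x + algebraMap (ZMod p) E⟮θ⟯ (k * _)) ^ (p - 1))]
  exact (Equiv.sum_comp (Equiv.mulRight₀ _ hb) _).trans (sum_add_algebraMap_pow_sub_one x)

theorem trace_algebraMap_mul_gen_pow_sub_one (hθ : θ ^ p - θ = algebraMap E Ω b)
    (hb : Algebra.trace (ZMod p) E b ≠ 0) :
    Algebra.trace (ZMod p) E⟮θ⟯ (algebraMap E E⟮θ⟯ b * AdjoinSimple.gen E θ ^ (p - 1)) =
      -Algebra.trace (ZMod p) E b := by
  have := adjoin.finiteDimensional (isIntegral hp.out.one_lt hθ)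
  have := Module.finite_of_finite (ZMod p) (M := E)
  rw [← Algebra.trace_trace (S := E), ← Algebra.smul_def, map_smul, trace_gen_pow_sub_one hθ hb,
    smul_eq_mul, mul_neg_one, map_neg]


section IntermediateField

variable {Ω : Type*} [Field Ω] [Algebra (ZMod p) Ω] {θ : Ω} (F : IntermediateField (ZMod p) Ω)
  [Finite F] {b : F}

theorem finrank_restrictScalars_adjoin (hθ : θ ^ p - θ = b)
    (hb : Algebra.trace (ZMod p) F b ≠ 0) :
    Module.finrank (ZMod p) (F⟮θ⟯.restrictScalars (ZMod p)) = Module.finrank (ZMod p) F * p := by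
  rw [(restrictScalarsAlgEquiv _).toLinearEquiv.finrank_eq,
    ← Module.finrank_mul_finrank (ZMod p) F F⟮θ⟯, finrank_adjoin hθ hb]

theorem trace_restrictScalars_adjoin (hθ : θ ^ p - θ = b)
    (hb : Algebra.trace (ZMod p) F b ≠ 0) (h : b * θ ^ (p - 1) ∈ F⟮θ⟯.restrictScalars (ZMod p)) :
    Algebra.trace (ZMod p) (F⟮θ⟯.restrictScalars (ZMod p)) ⟨b * θ ^ (p - 1), h⟩ =
      -Algebra.trace (ZMod p) F b := by
  rw [← Algebra.trace_eq_of_algEquiv (restrictScalarsAlgEquiv _)]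
  exact trace_algebraMap_mul_gen_pow_sub_one hθ hb

end IntermediateField

end ArtinSchreier

section Tower

variable (p) [hp : Fact p.Prime] {Ω : Type*} [Field Ω] [Algebra (ZMod p) Ω] (c : ℕ → Ω)

/-- The paper's `L_{k-1}`: `c j` is the paper's `c_j` for `j ≥ 0`, and `c_{-1} = 1` is dropped, so
`towerField p c 0 = 𝔽_p` and `(∏ j ∈ Finset.range k, c j) ^ (p - 1)` is `a_{k-1}`. -/
def towerField (k : ℕ) : IntermediateField (ZMod p) Ω :=
  adjoin (ZMod p) (c '' Set.Iio k)

theorem towerField_zero : towerField p c 0 = ⊥ := by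
  simp [towerField]

theorem towerField_succ (k : ℕ) :
    towerField p c (k + 1) = (adjoin (towerField p c k) {c k}).restrictScalars (ZMod p) := by
  rw [towerField, towerField, adjoin_adjoin_left, Set.union_singleton, ← Set.image_insert_eq,
    ← Order.Iio_succ_eq_insert, Order.succ_eq_add_one]

theorem prod_pow_mem_towerField (k : ℕ) :
    (∏ j ∈ Finset.range k, c j) ^ (p - 1) ∈ towerField p c k := by
  refine pow_mem (prod_mem fun j hj => ?_) _
  exact subset_adjoin _ _ (Set.mem_image_of_mem c (Finset.mem_range.mp hj))

theorem finrank_towerField_and_trace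
    (hc : ∀ k, c k ^ p - c k = (∏ j ∈ Finset.range k, c j) ^ (p - 1)) (k : ℕ) :
    Module.finrank (ZMod p) (towerField p c k) = p ^ k ∧
      ∀ h : (∏ j ∈ Finset.range k, c j) ^ (p - 1) ∈ towerField p c k,
        Algebra.trace (ZMod p) (towerField p c k) ⟨(∏ j ∈ Finset.range k, c j) ^ (p - 1), h⟩ =
          (-1) ^ k := by
  induction k with
  | zero =>
    rw [towerField_zero]
    refine ⟨IntermediateField.finrank_bot, fun h => ?_⟩
    have hone : (⟨_, h⟩ : (⊥ : IntermediateField (ZMod p) Ω)) = algebraMap (ZMod p) _ 1 :=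
      Subtype.ext (by simp)
    rw [hone, Algebra.trace_algebraMap, IntermediateField.finrank_bot, one_smul, pow_zero]
  | succ k ih =>
    obtain ⟨hfin, htr⟩ := ih
    have : FiniteDimensional (ZMod p) (towerField p c k) :=
      Module.finite_of_finrank_pos (hfin ▸ pow_pos hp.out.pos k)
    have : Finite (towerField p c k) := Module.finite_of_finite (ZMod p)
    have hb := htr (prod_pow_mem_towerField p c k)
    have hb0 := hb ▸ pow_ne_zero k (neg_ne_zero.2 one_ne_zero)
    rw [towerField_succ, Finset.prod_range_succ, mul_pow, pow_succ, pow_succ, mul_neg_one, ← hb,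
      ← hfin]
    exact ⟨ArtinSchreier.finrank_restrictScalars_adjoin _ (hc k) hb0,
      ArtinSchreier.trace_restrictScalars_adjoin _ (hc k) hb0⟩

end Tower

theorem trace_a_i_eq_neg_one_pow (p : ℕ) [Fact p.Prime]
    (c : ℕ → AlgebraicClosure (ZMod p))
    (hc : ∀ i, c i ^ p - c i = (∏ j ∈ Finset.range i, c j) ^ (p - 1))
    (i : ℕ)
    (ha : (∏ j ∈ Finset.range (i + 1), c j) ^ (p - 1) ∈
      Algebra.adjoin (ZMod p) {x | ∃ j ≤ i, x = c j}) :
    Algebra.trace (ZMod p) (Algebra.adjoin (ZMod p) {x | ∃ j ≤ i, x = c j})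
      ⟨(∏ j ∈ Finset.range (i + 1), c j) ^ (p - 1), ha⟩ = (-1) ^ (i + 1) ∧
    Module.finrank (ZMod p)
      (Algebra.adjoin (ZMod p) {x | ∃ j ≤ i, x = c j}) = p ^ (i + 1) := by
  have hgens : {x | ∃ j ≤ i, x = c j} = c '' Set.Iio (i + 1) := by
    ext; simp [eq_comm]
  have hadjoin : Algebra.adjoin (ZMod p) {x | ∃ j ≤ i, x = c j} =
      (towerField p c (i + 1)).toSubalgebra := by
    rw [hgens, towerField, adjoin_toSubalgebra_of_isAlgebraic fun x _ =>
      Algebra.IsAlgebraic.isAlgebraic x]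
  obtain ⟨hfinrank, htrace⟩ := finrank_towerField_and_trace p c hc (i + 1)
  revert ha
  rw [hadjoin]
  exact fun ha => ⟨htrace ha, hfinrank⟩
end

section
/- In the Artin-Schreier tower over F_p, for every i ≥ 0 one has the identity c_i^(p^(p^i)) = c_i + (-1)^i. -/
open Finset

section ASAux

variable {p : ℕ} [Fact p.Prime]

/-- Split a sum over `range (N * n)` into a double sum. -/
lemma AS_sum_range_mul {M : Type*} [AddCommMonoid M] (g : ℕ → M) (N n : ℕ) :
    ∑ t ∈ Finset.range (N * n), g t
      = ∑ r ∈ Finset.range N, ∑ s ∈ Finset.range n, g (r * n + s) := by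
  induction N with
  | zero => simp
  | succ N ih => rw [Nat.succ_mul, Finset.sum_range_add, ih, Finset.sum_range_succ]

/-- Sum over `ZMod p` equals sum over `range p` of casts. -/
lemma AS_sum_univ_zmod {M : Type*} [AddCommMonoid M] (g : ZMod p → M) :
    ∑ x : ZMod p, g x = ∑ r ∈ Finset.range p, g (r : ZMod p) := by
  have hp : 0 < p := (Fact.out : p.Prime).pos
  refine Finset.sum_nbij' (fun x => ZMod.val x) (fun r => (r : ZMod p)) ?_ ?_ ?_ ?_ ?_
  · intro a _; exact Finset.mem_range.mpr (ZMod.val_lt a)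
  · intro a _; exact Finset.mem_univ _
  · intro a _; exact ZMod.natCast_rightInverse a
  · intro a ha; exact ZMod.val_cast_of_lt (Finset.mem_range.mp ha)
  · intro a _; rw [ZMod.natCast_rightInverse a]

lemma AS_zmod_sum_pow_card_sub_one :
    (∑ x : ZMod p, x ^ (p - 1)) = -1 := by
  have hp : p.Prime := Fact.out
  have h1 : ∀ x : ZMod p, x ^ (p - 1) = 1 - (if x = 0 then 1 else 0) := by
    intro x
    split_ifs with h
    · subst h
      have h2 := hp.two_le
      rw [zero_pow (by omega : p - 1 ≠ 0)]; simp
    · rw [ZMod.pow_card_sub_one_eq_one h]; simp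
  rw [Finset.sum_congr rfl fun x _ => h1 x, Finset.sum_sub_distrib]
  rw [Finset.sum_ite_eq' Finset.univ (0 : ZMod p) (fun _ => (1 : ZMod p))]
  simp only [Finset.mem_univ, if_true, Finset.sum_const, Finset.card_univ, ZMod.card, nsmul_eq_mul,
    mul_one]
  rw [ZMod.natCast_self]
  ring

/-- The key character sum: `∑_{r<p} (x + r)^(p-1) = -1`. -/
lemma AS_key_sum (x : AlgebraicClosure (ZMod p)) :
    ∑ r ∈ Finset.range p, (x + (r : AlgebraicClosure (ZMod p))) ^ (p - 1) = -1 := by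
  have hp : p.Prime := Fact.out
  have hp2 : 2 ≤ p := hp.two_le
  have hcast : ∀ m : ℕ, ∑ r ∈ Finset.range p, ((r : AlgebraicClosure (ZMod p))) ^ m
      = algebraMap (ZMod p) (AlgebraicClosure (ZMod p)) (∑ x : ZMod p, x ^ m) := by
    intro m
    rw [map_sum, AS_sum_univ_zmod (fun x => algebraMap (ZMod p) (AlgebraicClosure (ZMod p)) (x ^ m))]
    refine Finset.sum_congr rfl fun r _ => ?_
    rw [map_pow, map_natCast]
  have hrw : ∀ r ∈ Finset.range p, (x + (r : AlgebraicClosure (ZMod p))) ^ (p - 1)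
      = ∑ j ∈ Finset.range ((p - 1) + 1),
          x ^ j * (r : AlgebraicClosure (ZMod p)) ^ (p - 1 - j) * ((p - 1).choose j : AlgebraicClosure (ZMod p)) := by
    intro r _; exact add_pow x _ (p - 1)
  rw [Finset.sum_congr rfl hrw, Finset.sum_comm]
  rw [Finset.sum_eq_single 0]
  · simp only [pow_zero, one_mul, Nat.choose_zero_right, Nat.cast_one, mul_one, Nat.sub_zero]
    rw [hcast (p - 1), AS_zmod_sum_pow_card_sub_one]
    simp
  · intro j hj hj0
    have hsum0 : ∑ x : ZMod p, x ^ (p - 1 - j) = 0 := by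
      apply FiniteField.sum_pow_lt_card_sub_one
      rw [ZMod.card]
      have : j < (p - 1) + 1 := Finset.mem_range.mp hj
      omega
    have : ∑ r ∈ Finset.range p,
        x ^ j * (r : AlgebraicClosure (ZMod p)) ^ (p - 1 - j) * ((p - 1).choose j : AlgebraicClosure (ZMod p))
        = (x ^ j * ((p - 1).choose j : AlgebraicClosure (ZMod p)))
          * ∑ r ∈ Finset.range p, ((r : AlgebraicClosure (ZMod p))) ^ (p - 1 - j) := by
      rw [Finset.mul_sum]
      exact Finset.sum_congr rfl fun r _ => by ring
    rw [this, hcast (p - 1 - j), hsum0, map_zero, mul_zero]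
  · intro h
    exact absurd (Finset.mem_range.mpr (by omega)) h

/-- Iterating Frobenius on a generator: sum formula. -/
lemma AS_frob_sum (c : ℕ → AlgebraicClosure (ZMod p))
    (hc : ∀ i, c i ^ p - c i = (∏ j ∈ Finset.range i, c j) ^ (p - 1)) (i n : ℕ) :
    c i ^ p ^ n = c i
      + ∑ t ∈ Finset.range n, ((∏ j ∈ Finset.range i, c j) ^ (p - 1)) ^ p ^ t := by
  induction n with
  | zero => simp
  | succ n ih =>
    have h1 : c i ^ p ^ (n + 1) = (c i ^ p ^ n) ^ p := by rw [← pow_mul, ← pow_succ]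
    have h2 : c i ^ p = c i + (∏ j ∈ Finset.range i, c j) ^ (p - 1) := by
      have := hc i; linear_combination this
    rw [h1, ih, add_pow_char, sum_pow_char, h2, Finset.sum_range_succ']
    have h3 : ∀ t ∈ Finset.range n,
        (((∏ j ∈ Finset.range i, c j) ^ (p - 1)) ^ p ^ t) ^ p
          = ((∏ j ∈ Finset.range i, c j) ^ (p - 1)) ^ p ^ (t + 1) := by
      intro t _; rw [← pow_mul, ← pow_succ]
    rw [Finset.sum_congr rfl h3, pow_zero, pow_one]
    ring

lemma AS_cast_pow_pow (a : ZMod p) (n : ℕ) :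
    (algebraMap (ZMod p) (AlgebraicClosure (ZMod p)) a) ^ p ^ n
      = algebraMap (ZMod p) (AlgebraicClosure (ZMod p)) a := by
  rw [← map_pow, ZMod.pow_card_pow]

/-- Multiples of the period. -/
lemma AS_frob_mult (c : ℕ → AlgebraicClosure (ZMod p)) (j : ℕ)
    (hPj : c j ^ p ^ p ^ j = c j + (-1) ^ j) (r : ℕ) :
    c j ^ p ^ (r * p ^ j) = c j + (r : AlgebraicClosure (ZMod p)) * (-1) ^ j := by
  induction r with
  | zero => simp
  | succ r ih =>
    have h1 : c j ^ p ^ ((r + 1) * p ^ j) = (c j ^ p ^ (r * p ^ j)) ^ p ^ p ^ j := by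
      rw [← pow_mul, ← pow_add]
      congr 2
      ring
    have h4 : ((r : AlgebraicClosure (ZMod p)) * (-1) ^ j) ^ p ^ p ^ j
        = (r : AlgebraicClosure (ZMod p)) * (-1) ^ j := by
      have : ((r : AlgebraicClosure (ZMod p)) * (-1) ^ j)
          = algebraMap (ZMod p) (AlgebraicClosure (ZMod p)) ((r : ZMod p) * (-1) ^ j) := by
        push_cast
        ring
      rw [this, AS_cast_pow_pow]
    rw [h1, ih, add_pow_char_pow, hPj, h4]
    push_cast
    ring

end ASAux

theorem c_pow_frobenius_iterate (p : ℕ) [Fact p.Prime]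
    (c : ℕ → AlgebraicClosure (ZMod p))
    (hc : ∀ i, c i ^ p - c i = (∏ j ∈ Finset.range i, c j) ^ (p - 1))
    (i : ℕ) :
    c i ^ p ^ p ^ i = c i + (-1) ^ i := by
  have hp : p.Prime := Fact.out
  induction i using Nat.strong_induction_on with
  | _ i IH =>
    cases i with
    | zero =>
      have h := hc 0
      simp only [Finset.range_zero, Finset.prod_empty, one_pow] at h
      simp only [pow_zero, pow_one]
      linear_combination h
    | succ m =>
      have hm : c m ^ p ^ p ^ m = c m + (-1) ^ m := IH m (by omega)
      -- Frobenius iterated r * p^m times fixes c j for j < m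
      have hfix : ∀ j, j < m → ∀ r : ℕ, c j ^ p ^ (r * p ^ m) = c j := by
        intro j hj r
        have hPj := IH j (by omega)
        have he : r * p ^ m = (r * p ^ (m - j)) * p ^ j := by
          rw [mul_assoc, ← pow_add]
          congr 2
          omega
        rw [he, AS_frob_mult c j hPj]
        have h0 : ((r * p ^ (m - j) : ℕ) : AlgebraicClosure (ZMod p)) = 0 := by
          push_cast
          rw [CharP.cast_eq_zero (AlgebraicClosure (ZMod p)) p, zero_pow (by omega : m - j ≠ 0), mul_zero]
        rw [h0, zero_mul, add_zero]
      -- and moves c m by r * (-1)^m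
      have hmove : ∀ r : ℕ, c m ^ p ^ (r * p ^ m) = c m + (r : AlgebraicClosure (ZMod p)) * (-1) ^ m :=
        AS_frob_mult c m hm
      -- action on products
      have hprod : ∀ e : ℕ, (∏ j ∈ Finset.range (m + 1), c j) ^ p ^ e
          = ∏ j ∈ Finset.range (m + 1), (c j) ^ p ^ e := by
        intro e
        simp_rw [← iterateFrobenius_def, map_prod]
      have hB : ∀ r : ℕ, (∏ j ∈ Finset.range (m + 1), c j) ^ p ^ (r * p ^ m)
          = (∏ j ∈ Finset.range m, c j) * (c m + (r : AlgebraicClosure (ZMod p)) * (-1) ^ m) := by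
        intro r
        rw [hprod, Finset.prod_range_succ, hmove r]
        congr 1
        exact Finset.prod_congr rfl fun j hj => hfix j (Finset.mem_range.mp hj) r
      -- the epsilon trick
      have hε2 : ((-1 : AlgebraicClosure (ZMod p)) ^ m) * ((-1 : AlgebraicClosure (ZMod p)) ^ m) = 1 := by
        rw [← mul_pow]
        norm_num
      have hεp : ((-1 : AlgebraicClosure (ZMod p)) ^ m) ^ (p - 1) = 1 := by
        have hneg : (-1 : AlgebraicClosure (ZMod p)) ^ (p - 1) = 1 := by
          rcases hp.eq_two_or_odd' with h2 | hodd
          · subst h2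
            have h0 := CharP.cast_eq_zero (AlgebraicClosure (ZMod 2)) 2
            push_cast at h0
            norm_num
            linear_combination -h0
          · exact (Nat.Odd.sub_odd hodd odd_one).neg_one_pow
        rw [← pow_mul, mul_comm, pow_mul, hneg, one_pow]
      have htrick : ∀ r : ℕ, (c m + (r : AlgebraicClosure (ZMod p)) * (-1) ^ m) ^ (p - 1)
          = ((-1) ^ m * c m + (r : AlgebraicClosure (ZMod p))) ^ (p - 1) := by
        intro r
        have h : c m + (r : AlgebraicClosure (ZMod p)) * (-1) ^ m = (-1) ^ m * ((-1) ^ m * c m + (r : AlgebraicClosure (ZMod p))) := by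
          rw [mul_add, ← mul_assoc, hε2]
          ring
        rw [h, mul_pow, hεp, one_mul]
      -- inner sum over r
      have hinner : ∑ r ∈ Finset.range p,
          ((∏ j ∈ Finset.range (m + 1), c j) ^ (p - 1)) ^ p ^ (r * p ^ m)
          = -((∏ j ∈ Finset.range m, c j) ^ (p - 1)) := by
        have h1 : ∀ r ∈ Finset.range p,
            ((∏ j ∈ Finset.range (m + 1), c j) ^ (p - 1)) ^ p ^ (r * p ^ m)
            = (∏ j ∈ Finset.range m, c j) ^ (p - 1) * ((-1) ^ m * c m + (r : AlgebraicClosure (ZMod p))) ^ (p - 1) := by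
          intro r _
          rw [← pow_right_comm, hB r, mul_pow, htrick r]
        rw [Finset.sum_congr rfl h1, ← Finset.mul_sum, AS_key_sum ((-1) ^ m * c m)]
        ring
      -- main computation
      rw [AS_frob_sum c hc (m + 1) (p ^ (m + 1))]
      congr 1
      have hsplit : p ^ (m + 1) = p * p ^ m := by rw [pow_succ]; ring
      rw [hsplit, AS_sum_range_mul, Finset.sum_comm]
      have houter : ∀ s ∈ Finset.range (p ^ m),
          ∑ r ∈ Finset.range p,
            ((∏ j ∈ Finset.range (m + 1), c j) ^ (p - 1)) ^ p ^ (r * p ^ m + s)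
          = -(((∏ j ∈ Finset.range m, c j) ^ (p - 1)) ^ p ^ s) := by
        intro s _
        have h2 : ∀ r ∈ Finset.range p,
            ((∏ j ∈ Finset.range (m + 1), c j) ^ (p - 1)) ^ p ^ (r * p ^ m + s)
            = (((∏ j ∈ Finset.range (m + 1), c j) ^ (p - 1)) ^ p ^ (r * p ^ m)) ^ p ^ s := by
          intro r _
          conv_rhs => rw [← pow_mul, ← pow_add]
        rw [Finset.sum_congr rfl h2]
        have h3 : ∑ r ∈ Finset.range p,
            (((∏ j ∈ Finset.range (m + 1), c j) ^ (p - 1)) ^ p ^ (r * p ^ m)) ^ p ^ s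
            = (∑ r ∈ Finset.range p,
                ((∏ j ∈ Finset.range (m + 1), c j) ^ (p - 1)) ^ p ^ (r * p ^ m)) ^ p ^ s := by
          rw [sum_pow_char_pow]
        rw [h3, hinner]
        rw [← iterateFrobenius_def, map_neg, iterateFrobenius_def]
      rw [Finset.sum_congr rfl houter, Finset.sum_neg_distrib]
      have h4 : ∑ s ∈ Finset.range (p ^ m), ((∏ j ∈ Finset.range m, c j) ^ (p - 1)) ^ p ^ s
          = (-1) ^ m := by
        have := AS_frob_sum c hc m (p ^ m)
        rw [hm] at this
        exact (add_left_cancel this.symm)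
      rw [h4]
      ring
end

section
/- In the Artin-Schreier tower over F_p, for every i ≥ 0 one has c_i^(N_i) = a_{i-1}, where N_i = (p^(p^(i+1)) - 1)/(p^(p^i) - 1). -/
/-!
Write `a = (c_0 ⋯ c_{i-1})^(p-1)` and `t = (-1)^i`. The heart of the matter is that the trace
`∑_{m < p^i} a^(p^m)` of `a` from `𝔽_{p^(p^i)}` to `𝔽_p` equals `t`. Granting this, iterating
`c_i^p = c_i + a` gives `c_i^(p^(p^i)) = c_i + t`, hence `c_i^(q^j) = c_i + j t` for
`q = p^(p^i)`, and `c_i^(N_i) = ∏_{j < p} (c_i + j t) = c_i^p - c_i = a`.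

The trace is computed by induction on `i`. Writing `m = p^i v + u` with `u < p^i` and `v < p`,
the new summand `(a c_i^(p-1))^(p^m)` equals `a^(p^u) (c_i^(p^u) + v t)^(p-1)`, and summing over
`v` uses the identity `∑_{v ∈ 𝔽_p} (x + v t)^(p-1) = -t^(p-1)`, valid for every `x`.
-/

open Finset Polynomial

theorem FiniteField.prod_univ_X_sub_C (K : Type*) [Field K] [Fintype K] :
    ∏ a : K, (X - C a) = X ^ Fintype.card K - X := by
  have hq : 1 < Fintype.card K := Fintype.one_lt_card
  have hmonic : (X ^ Fintype.card K - X : K[X]).Monic :=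
    monic_X_pow_sub (by rw [degree_X]; exact_mod_cast hq)
  have hroots : Multiset.card (X ^ Fintype.card K - X : K[X]).roots =
      (X ^ Fintype.card K - X : K[X]).natDegree := by
    rw [roots_X_pow_card_sub_X, X_pow_card_sub_X_natDegree_eq K hq]; rfl
  rw [← prod_multiset_X_sub_C_of_monic_of_roots_card_eq hmonic hroots, roots_X_pow_card_sub_X]
  rfl

@[to_additive]
theorem ZMod.prod_range_natCast {M : Type*} [CommMonoid M] (n : ℕ) [NeZero n]
    (f : ZMod n → M) : ∏ v ∈ range n, f v = ∏ a, f a :=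
  prod_nbij' (↑) ZMod.val (fun _ _ ↦ mem_univ _) (fun a _ ↦ mem_range.mpr a.val_lt)
    (fun _ hv ↦ ZMod.val_cast_of_lt (mem_range.mp hv)) (fun a _ ↦ ZMod.natCast_zmod_val a)
    (fun _ _ ↦ rfl)

theorem sum_range_mul_eq_sum_sum {M : Type*} [AddCommMonoid M] (f : ℕ → M) (n k : ℕ) :
    ∑ m ∈ range (n * k), f m = ∑ v ∈ range k, ∑ u ∈ range n, f (n * v + u) := by
  induction k with
  | zero => simp
  | succ k ih => rw [mul_add_one, sum_range_add, ih, sum_range_succ]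

theorem pow_pow_eq_self {M : Type*} [Monoid M] {a : M} {q : ℕ} (h : a ^ q = a) (k : ℕ) :
    a ^ q ^ k = a := by
  induction k with
  | zero => rw [pow_zero, pow_one]
  | succ k ih => rw [pow_succ, pow_mul, ih, h]

/-- For `b ∈ 𝔽_{p^n}` this is the trace of `b` from `𝔽_{p^n}` to `𝔽_p`. -/
def absTrace {R : Type*} [CommSemiring R] (p n : ℕ) (b : R) : R :=
  ∑ m ∈ range n, b ^ p ^ m

section CharP

variable {R : Type*} [CommRing R] (p : ℕ) [Fact p.Prime] [CharP R p]

theorem neg_one_pow_pow_char (i : ℕ) : ((-1 : R) ^ i) ^ p = (-1) ^ i := by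
  rw [pow_right_comm, neg_one_pow_char]

theorem natCast_pow_char (v : ℕ) : (v : R) ^ p = v := by
  rw [← frobenius_def, map_natCast]

theorem prod_range_add_natCast (x : R) : ∏ v ∈ range p, (x + v) = x ^ p - x := by
  have h := congrArg (fun f ↦ eval x (f.map (ZMod.castHom (dvd_refl p) R)))
    (FiniteField.prod_univ_X_sub_C (ZMod p))
  simp only [Polynomial.map_prod, eval_prod, ZMod.card, Polynomial.map_sub, map_X, map_C,
    Polynomial.map_pow, eval_sub, eval_X, eval_C, eval_pow] at h
  calc ∏ v ∈ range p, (x + v) = ∏ a : ZMod p, (x + ZMod.castHom (dvd_refl p) R a) := by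
        simp only [← ZMod.prod_range_natCast, map_natCast]
    _ = ∏ a : ZMod p, (x - ZMod.castHom (dvd_refl p) R a) :=
        Fintype.prod_equiv (Equiv.neg _) _ _ fun a ↦ by simp [sub_eq_add_neg]
    _ = x ^ p - x := h

theorem sum_range_natCast_pow_of_lt {m : ℕ} (hm : m < p - 1) :
    ∑ v ∈ range p, (v : R) ^ m = 0 := by
  have h := congrArg (ZMod.castHom (dvd_refl p) R)
    (FiniteField.sum_pow_lt_card_sub_one (ZMod p) m (by rwa [ZMod.card]))
  rw [map_sum, map_zero, ← ZMod.sum_range_natCast] at h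
  simpa using h

theorem sum_range_natCast_pow_pred : ∑ v ∈ range p, (v : R) ^ (p - 1) = -1 := by
  obtain ⟨n, rfl⟩ : ∃ n, p = n + 1 :=
    ⟨p - 1, (Nat.sub_add_cancel (Fact.out : p.Prime).one_le).symm⟩
  have hn : n ≠ 0 := by rintro rfl; exact Nat.not_prime_one Fact.out
  have hunit : ∀ v ∈ range n, ((v + 1 : ℕ) : R) ^ n = 1 := fun v hv ↦ by
    have hv0 : ((v + 1 : ℕ) : ZMod (n + 1)) ≠ 0 := by
      rw [Ne, ZMod.natCast_eq_zero_iff]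
      exact Nat.not_dvd_of_pos_of_lt v.succ_pos (by simpa using hv)
    simpa using congrArg (ZMod.castHom (dvd_refl _) R) (ZMod.pow_card_sub_one_eq_one hv0)
  rw [Nat.add_sub_cancel, sum_range_succ', sum_congr rfl hunit, sum_const, card_range,
    nsmul_one, Nat.cast_zero, zero_pow hn, add_zero]
  exact eq_neg_of_add_eq_zero_left (by exact_mod_cast CharP.cast_eq_zero R (n + 1))

theorem sum_range_add_natCast_mul_pow_pred (x t : R) :
    ∑ v ∈ range p, (x + v * t) ^ (p - 1) = -t ^ (p - 1) := by
  have hp : 2 ≤ p := (Fact.out : p.Prime).two_le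
  calc ∑ v ∈ range p, (x + v * t) ^ (p - 1)
      = ∑ k ∈ range (p - 1 + 1), x ^ k * t ^ (p - 1 - k) * (p - 1).choose k *
          ∑ v ∈ range p, (v : R) ^ (p - 1 - k) := by
        simp_rw [add_pow, mul_pow]
        rw [sum_comm]
        refine sum_congr rfl fun k _ ↦ ?_
        rw [mul_sum]
        exact sum_congr rfl fun v _ ↦ by ring
    _ = x ^ 0 * t ^ (p - 1 - 0) * (p - 1).choose 0 * ∑ v ∈ range p, (v : R) ^ (p - 1 - 0) :=
        sum_eq_single 0 (fun k hk hk0 ↦ by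
          rw [sum_range_natCast_pow_of_lt p (by simp at hk; omega), mul_zero]) (by simp)
    _ = -t ^ (p - 1) := by simp [sum_range_natCast_pow_pred]

theorem prod_range_add_natCast_mul {K : Type*} [Field K] [CharP K p] (x t : K) :
    ∏ v ∈ range p, (x + v * t) = x ^ p - t ^ (p - 1) * x := by
  have hp : 1 < p := (Fact.out : p.Prime).one_lt
  rcases eq_or_ne t 0 with rfl | ht
  · simp [zero_pow (Nat.sub_ne_zero_of_lt hp)]
  have htp : t ^ p = t ^ (p - 1) * t := by rw [← pow_succ, Nat.sub_add_cancel hp.le]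
  calc ∏ v ∈ range p, (x + v * t) = ∏ v ∈ range p, t * (x / t + v) :=
        prod_congr rfl fun v _ ↦ by field_simp
    _ = t ^ p * ((x / t) ^ p - x / t) := by
        rw [prod_mul_distrib, prod_const, card_range, prod_range_add_natCast]
    _ = x ^ p - t ^ (p - 1) * x := by
        rw [mul_sub, div_pow, mul_div_cancel₀ _ (pow_ne_zero _ ht), htp]
        field_simp

theorem pow_pow_eq_add_absTrace {y b : R} (hy : y ^ p - y = b) (k : ℕ) :
    y ^ p ^ k = y + absTrace p k b := by
  induction k with
  | zero => simp [absTrace]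
  | succ k ih =>
    have hy' : y ^ p = y + b := by rw [← hy]; ring
    rw [pow_succ, pow_mul, ih, add_pow_char, hy', absTrace, absTrace, sum_range_succ',
      sum_pow_char]
    simp only [← pow_mul, ← pow_succ, pow_zero, pow_one]
    ring

theorem pow_pow_pow_eq_add_natCast_mul {y t : R} {n : ℕ} (hy : y ^ p ^ n = y + t)
    (ht : t ^ p = t) (v : ℕ) : y ^ (p ^ n) ^ v = y + v * t := by
  induction v with
  | zero => simp
  | succ v ih =>
    rw [pow_succ, pow_mul, ih, add_pow_char_pow, hy, mul_pow,
      pow_pow_eq_self (natCast_pow_char p v), pow_pow_eq_self ht]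
    push_cast
    ring

theorem pow_pow_eq_self_of_absTrace {y b t : R} {n : ℕ} (hy : y ^ p - y = b)
    (ht : absTrace p n b = t) (htp : t ^ p = t) : b ^ p ^ n = b := by
  have hyn : y ^ p ^ n = y + t := ht ▸ pow_pow_eq_add_absTrace p hy n
  rw [← hy, sub_pow_char_pow, pow_right_comm, hyn, add_pow_char, htp]
  ring

theorem absTrace_mul_pow_pred {y b t : R} {n : ℕ} (hy : y ^ p - y = b)
    (ht : absTrace p n b = t) (htp : t ^ p = t) :
    absTrace p (n * p) (b * y ^ (p - 1)) = -t := by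
  have hyn : y ^ p ^ n = y + t := ht ▸ pow_pow_eq_add_absTrace p hy n
  have hb : b ^ p ^ n = b := pow_pow_eq_self_of_absTrace p hy ht htp
  have hterm : ∀ v u, (b * y ^ (p - 1)) ^ p ^ (n * v + u) =
      b ^ p ^ u * (y ^ p ^ u + v * t) ^ (p - 1) := fun v u ↦ by
    rw [pow_add, pow_mul, pow_mul, mul_pow, pow_pow_eq_self hb, pow_right_comm y, mul_pow,
      pow_right_comm _ (p - 1), pow_pow_pow_eq_add_natCast_mul p hyn htp, add_pow_char_pow,
      mul_pow, pow_pow_eq_self (natCast_pow_char p v), pow_pow_eq_self htp]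
  calc absTrace p (n * p) (b * y ^ (p - 1))
      = ∑ u ∈ range n, b ^ p ^ u * ∑ v ∈ range p, (y ^ p ^ u + v * t) ^ (p - 1) := by
        simp only [absTrace, sum_range_mul_eq_sum_sum, hterm, mul_sum]
        exact sum_comm
    _ = -(t ^ (p - 1) * t) := by
        simp only [sum_range_add_natCast_mul_pow_pred]
        rw [← sum_mul, show ∑ u ∈ range n, b ^ p ^ u = t from ht, mul_neg, mul_comm]
    _ = -t := by rw [← pow_succ, Nat.sub_add_cancel (Fact.out : p.Prime).one_le, htp]

theorem absTrace_prod_pow_pred {c : ℕ → R}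
    (hc : ∀ i, c i ^ p - c i = (∏ j ∈ range i, c j) ^ (p - 1)) (i : ℕ) :
    absTrace p (p ^ i) ((∏ j ∈ range i, c j) ^ (p - 1)) = (-1) ^ i := by
  induction i with
  | zero => simp [absTrace]
  | succ i ih =>
    rw [prod_range_succ, mul_pow, pow_succ,
      absTrace_mul_pow_pred p (hc i) ih (neg_one_pow_pow_char p i), pow_succ, mul_neg_one]

end CharP

theorem c_pow_N_eq_a_pred (p : ℕ) [Fact p.Prime]
    (c : ℕ → AlgebraicClosure (ZMod p))
    (hc : ∀ i, c i ^ p - c i = (∏ j ∈ Finset.range i, c j) ^ (p - 1))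
    (i : ℕ) :
    c i ^ (∑ j ∈ Finset.range p, (p ^ p ^ i) ^ j) =
      (∏ j ∈ Finset.range i, c j) ^ (p - 1) := by
  have hsign : ((-1 : AlgebraicClosure (ZMod p)) ^ i) ^ p = (-1) ^ i := neg_one_pow_pow_char p i
  have hsign_pred : ((-1 : AlgebraicClosure (ZMod p)) ^ i) ^ (p - 1) = 1 :=
    mul_right_cancel₀ (pow_ne_zero i (neg_ne_zero.mpr one_ne_zero)) <| by
      rw [← pow_succ, Nat.sub_add_cancel (Fact.out : p.Prime).one_le, hsign, one_mul]
  have hfrob : c i ^ p ^ p ^ i = c i + (-1) ^ i := by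
    rw [pow_pow_eq_add_absTrace p (hc i), absTrace_prod_pow_pred p hc]
  calc c i ^ (∑ j ∈ range p, (p ^ p ^ i) ^ j) = ∏ j ∈ range p, c i ^ (p ^ p ^ i) ^ j :=
        (prod_pow_eq_pow_sum _ _ _).symm
    _ = ∏ j ∈ range p, (c i + j * (-1) ^ i) :=
        prod_congr rfl fun j _ ↦ pow_pow_pow_eq_add_natCast_mul p hfrob hsign j
    _ = (∏ j ∈ range i, c j) ^ (p - 1) := by
        rw [prod_range_add_natCast_mul, hsign_pred, one_mul, hc]
end

section
/- In the Artin-Schreier tower over F_2, the element c_1 has multiplicative order 15 and a_1 = c_0 c_1 has multiplicative order 5. Moreover, for every i ≥ 2, c_i^(N_1 ⋯ N_i) = 1 and a_i^(N_1 ⋯ N_i) = 1, where N_k = 2^(2^k) + 1 is the k-th Fermat number. -/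
open Finset

section Tower

variable {K : Type*} [Field K] [CharP K 2]

/-- partial products -/
private def AA (c : ℕ → K) (i : ℕ) : K := ∏ j ∈ Finset.range i, c j

private lemma AA_zero (c : ℕ → K) : AA c 0 = 1 := Finset.prod_range_zero c

private lemma AA_succ (c : ℕ → K) (i : ℕ) : AA c (i + 1) = AA c i * c i :=
  Finset.prod_range_succ c i

variable {c : ℕ → K} (hc : ∀ i, c i ^ 2 - c i = ∏ j ∈ Finset.range i, c j)

private lemma two_eq_zero : (2 : K) = 0 := by
  have := CharP.cast_eq_zero K 2; exact_mod_cast this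

private lemma add_self (x : K) : x + x = 0 := by
  have : x + x = 2 * x := by ring
  rw [this, two_eq_zero, zero_mul]

include hc in
private lemma csq (i : ℕ) : c i ^ 2 = c i + AA c i :=
  sub_eq_iff_eq_add'.mp (hc i)

include hc in
private lemma frob_iter (i m : ℕ) :
    c i ^ 2 ^ m = c i + ∑ t ∈ Finset.range m, AA c i ^ 2 ^ t := by
  induction m with
  | zero => simp
  | succ m ih =>
    have : c i ^ 2 ^ (m + 1) = (c i ^ 2 ^ m) ^ 2 := by
      rw [← pow_mul, pow_succ]
    rw [this, ih, add_sq, csq hc, sum_pow_char]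
    have h2 : (2 : K) = 0 := two_eq_zero
    rw [Finset.sum_range_succ']
    have : ∑ t ∈ Finset.range m, (AA c i ^ 2 ^ t) ^ 2
        = ∑ t ∈ Finset.range m, AA c i ^ 2 ^ (t + 1) := by
      refine Finset.sum_congr rfl fun t _ => ?_
      rw [← pow_mul, pow_succ]
    rw [this, h2]
    ring

include hc in
/-- main induction: a_i is fixed by the q-Frobenius and has absolute trace 1 -/
private lemma tower (i : ℕ) :
    AA c (i + 1) ^ 2 ^ 2 ^ (i + 1) = AA c (i + 1) ∧
    (∑ t ∈ Finset.range (2 ^ (i + 1)), AA c (i + 1) ^ 2 ^ t) = 1 := by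
  induction i with
  | zero =>
    have h1 : AA c 1 = c 0 := by rw [AA_succ, AA_zero, one_mul]
    have hsq : c 0 ^ 2 = c 0 + 1 := by rw [csq hc, AA_zero]
    constructor
    · have : (2 : ℕ) ^ 2 ^ 1 = 4 := by norm_num
      rw [h1, this]
      linear_combination (c 0 ^ 2 + c 0) * hsq + c 0 ^ 2 * add_self (1 : K)
    · rw [h1]
      have : (2:ℕ) ^ 1 = 2 := by norm_num
      rw [this, Finset.sum_range_succ, Finset.sum_range_one, pow_zero, pow_one, pow_one, hsq]
      linear_combination add_self (c 0)
  | succ i ih =>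
    obtain ⟨hfix, htr⟩ := ih
    set q : ℕ := 2 ^ 2 ^ (i + 1) with hq
    have hcq : c (i + 1) ^ q = c (i + 1) + 1 := by
      rw [hq, frob_iter hc, htr]
    have hAsucc : AA c (i + 2) = AA c (i + 1) * c (i + 1) := AA_succ c (i + 1)
    have hAq : AA c (i + 2) ^ q = AA c (i + 1) * (c (i + 1) + 1) := by
      rw [hAsucc, mul_pow, hfix, hcq]
    have hqq : (2:ℕ) ^ 2 ^ (i + 2) = q * q := by
      rw [hq, ← pow_add]
      congr 1
      rw [pow_succ]
      ring
    constructor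
    · rw [hqq, pow_mul, hAq, mul_pow, hfix]
      have : (c (i + 1) + 1) ^ q = c (i + 1) ^ q + 1 ^ q := by
        rw [hq]; exact add_pow_char_pow _ _ 2 _
      rw [this, hcq, one_pow, hAsucc]
      congr 1
      linear_combination add_self (1 : K)
    · have h2 : (2:ℕ) ^ (i + 2) = 2 ^ (i + 1) + 2 ^ (i + 1) := by
        rw [pow_succ]; ring
      rw [h2, Finset.sum_range_add, ← htr]
      have key : ∀ t, AA c (i + 2) ^ 2 ^ t + AA c (i + 2) ^ 2 ^ (2 ^ (i + 1) + t)
          = AA c (i + 1) ^ 2 ^ t := by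
        intro t
        have e1 : (2:ℕ) ^ (2 ^ (i + 1) + t) = q * 2 ^ t := by rw [pow_add, hq]
        rw [e1, pow_mul]
        have e2 : (AA c (i + 2) + AA c (i + 2) ^ q) ^ 2 ^ t
            = AA c (i + 2) ^ 2 ^ t + (AA c (i + 2) ^ q) ^ 2 ^ t :=
          add_pow_char_pow _ _ 2 _
        rw [← e2]
        congr 1
        rw [hAq, hAsucc]
        have := add_self (AA c (i + 1) * c (i + 1))
        linear_combination this
      have : ∑ t ∈ Finset.range (2 ^ (i + 1)), AA c (i + 2) ^ 2 ^ (2 ^ (i + 1) + t)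
          = ∑ t ∈ Finset.range (2 ^ (i + 1)),
              (AA c (i + 1) ^ 2 ^ t - AA c (i + 2) ^ 2 ^ t) := by
        refine Finset.sum_congr rfl fun t _ => ?_
        rw [← key t]; ring
      rw [this, Finset.sum_sub_distrib]
      ring

include hc in
/-- c_{i+1} ^ (q+1) = a_i -/
private lemma cN (i : ℕ) : c (i + 1) ^ (2 ^ 2 ^ (i + 1) + 1) = AA c (i + 1) := by
  have hcq : c (i + 1) ^ 2 ^ 2 ^ (i + 1) = c (i + 1) + 1 := by
    rw [frob_iter hc, (tower hc i).2]
  rw [pow_add, hcq, pow_one]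
  have := csq hc (i + 1)
  have h := add_self (c (i + 1))
  linear_combination this + h

include hc in
private lemma APow (i : ℕ) :
    AA c (i + 2) ^ (∏ k ∈ Finset.Icc 1 (i + 1), (2 ^ 2 ^ k + 1)) = 1 := by
  induction i with
  | zero =>
    have hP : (∏ k ∈ Finset.Icc 1 1, (2 ^ 2 ^ k + 1)) = 5 := by decide
    have hc1 : c 1 ^ (5:ℕ) = c 0 := by
      have := cN hc 0
      norm_num at this
      rw [this, AA_succ, AA_zero, one_mul]
    have hc03 : c 0 ^ (3:ℕ) = 1 := by
      have hsq : c 0 ^ 2 = c 0 + 1 := by rw [csq hc, AA_zero]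
      have : c 0 ^ (3:ℕ) = c 0 ^ 2 * c 0 := by ring
      rw [this, hsq]
      linear_combination hsq + c 0 * add_self (1 : K)
    rw [hP, AA_succ, AA_succ, AA_zero, one_mul, mul_pow, hc1]
    calc c 0 ^ (5:ℕ) * c 0 = (c 0 ^ (3:ℕ)) ^ 2 := by ring
    _ = 1 := by rw [hc03]; norm_num
  | succ i ih =>
    have hP : (∏ k ∈ Finset.Icc 1 (i + 2), (2 ^ 2 ^ k + 1))
        = (∏ k ∈ Finset.Icc 1 (i + 1), (2 ^ 2 ^ k + 1)) * (2 ^ 2 ^ (i + 2) + 1) :=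
      Finset.prod_Icc_succ_top (by omega) _
    have hN : AA c (i + 3) ^ (2 ^ 2 ^ (i + 2) + 1) = AA c (i + 2) ^ (3:ℕ) := by
      have h1 : AA c (i + 3) = AA c (i + 2) * c (i + 2) := AA_succ c (i + 2)
      rw [h1, mul_pow, cN hc (i + 1)]
      have h2 : AA c (i + 2) ^ (2 ^ 2 ^ (i + 2) + 1)
          = AA c (i + 2) ^ 2 ^ 2 ^ (i + 2) * AA c (i + 2) := by
        rw [pow_add, pow_one]
      rw [h2, (tower hc (i + 1)).1]
      ring
    rw [hP, mul_comm, pow_mul, hN, ← pow_mul, mul_comm (3:ℕ), pow_mul, ih, one_pow]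

end Tower

theorem char_two_tower_orders
    (c : ℕ → AlgebraicClosure (ZMod 2))
    (hc : ∀ i, c i ^ 2 - c i = ∏ j ∈ Finset.range i, c j) :
    orderOf (c 1) = 15 ∧
    orderOf (∏ j ∈ Finset.range 2, c j) = 5 ∧
    ∀ i, 2 ≤ i →
      c i ^ (∏ k ∈ Finset.Icc 1 i, (2 ^ 2 ^ k + 1)) = 1 ∧
      (∏ j ∈ Finset.range (i + 1), c j) ^ (∏ k ∈ Finset.Icc 1 i, (2 ^ 2 ^ k + 1)) = 1 := by
  have hsq0 : c 0 ^ 2 = c 0 + 1 := by rw [csq hc, AA_zero]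
  have hc0ne : c 0 ≠ 1 := by
    intro h
    have h2 := hsq0
    rw [h, one_pow] at h2
    exact one_ne_zero (by linear_combination -h2)
  have h5e : (2:ℕ) ^ 2 ^ 1 + 1 = 5 := by norm_num
  have hc1 : c 1 ^ (5:ℕ) = c 0 := by
    have h := cN hc 0
    rw [h5e, AA_succ, AA_zero, one_mul] at h
    exact h
  have hsq1 : c 1 ^ 2 = c 1 + c 0 := by
    have h := csq hc 1
    rw [AA_succ, AA_zero, one_mul] at h
    exact h
  have hc03 : c 0 ^ (3:ℕ) = 1 := by
    linear_combination (c 0 + 1) * hsq0 + c 0 * add_self (1 : AlgebraicClosure (ZMod 2))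
  have hc1ne0 : c 1 ≠ 0 := by
    intro h
    have h0 : c 0 = 0 := by
      have h2 := hsq1
      rw [h] at h2
      linear_combination -h2
    rw [h0] at hsq0
    exact one_ne_zero (by linear_combination -hsq0)
  have hc115 : c 1 ^ (15:ℕ) = 1 := by
    have h : c 1 ^ (15:ℕ) = (c 1 ^ (5:ℕ)) ^ (3:ℕ) := by ring
    rw [h, hc1, hc03]
  have hc13 : c 1 ^ (3:ℕ) ≠ 1 := by
    intro h
    have h5 : c 1 ^ (5:ℕ) = c 1 ^ 2 := by
      have h' : c 1 ^ (5:ℕ) = c 1 ^ (3:ℕ) * c 1 ^ 2 := by ring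
      rw [h', h, one_mul]
    rw [hc1, hsq1] at h5
    exact hc1ne0 (by linear_combination -h5)
  have hc15 : c 1 ^ (5:ℕ) ≠ 1 := by rw [hc1]; exact hc0ne
  have hord1 : orderOf (c 1) = 15 := by
    have hd : orderOf (c 1) ∣ 15 := orderOf_dvd_of_pow_eq_one hc115
    have h3 : ¬ orderOf (c 1) ∣ 3 := fun h => hc13 (orderOf_dvd_iff_pow_eq_one.mp h)
    have h5 : ¬ orderOf (c 1) ∣ 5 := fun h => hc15 (orderOf_dvd_iff_pow_eq_one.mp h)
    have hle : orderOf (c 1) ≤ 15 := Nat.le_of_dvd (by norm_num) hd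
    interval_cases h : orderOf (c 1) <;> revert hd h3 h5 <;> decide
  have hx5 : (c 0 * c 1) ^ (5:ℕ) = 1 := by
    rw [mul_pow, hc1]
    calc c 0 ^ (5:ℕ) * c 0 = (c 0 ^ (3:ℕ)) ^ 2 := by ring
    _ = 1 := by rw [hc03]; norm_num
  have hxne : c 0 * c 1 ≠ 1 := by
    intro h
    have h2 : (c 0 + 1) * c 1 = c 0 := by
      calc (c 0 + 1) * c 1 = c 0 ^ 2 * c 1 - (c 0 ^ 2 - c 0 - 1) * c 1 := by ring
      _ = c 0 * (c 0 * c 1) - (c 0 ^ 2 - c 0 - 1) * c 1 := by ring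
      _ = c 0 := by rw [h, mul_one]; linear_combination -(c 1) * hsq0
    have hc1' : c 1 = c 0 + 1 := by
      linear_combination h2 - h - add_self (1 : AlgebraicClosure (ZMod 2))
    rw [hc1'] at hsq1
    exact hc0ne (by
      linear_combination hsq1 - hsq0 - add_self (1 : AlgebraicClosure (ZMod 2)))
  have hA2 : (∏ j ∈ Finset.range 2, c j) = c 0 * c 1 := by
    rw [Finset.prod_range_succ, Finset.prod_range_one]
  have hord2 : orderOf (∏ j ∈ Finset.range 2, c j) = 5 := by
    rw [hA2]
    have hd : orderOf (c 0 * c 1) ∣ 5 := orderOf_dvd_of_pow_eq_one hx5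
    rcases (Nat.Prime.eq_one_or_self_of_dvd (by norm_num) _ hd) with h | h
    · exact absurd (orderOf_eq_one_iff.mp h) hxne
    · exact h
  refine ⟨hord1, hord2, ?_⟩
  rintro i hi
  obtain ⟨j, rfl⟩ : ∃ j, i = j + 2 := ⟨i - 2, by omega⟩
  constructor
  · have hP : (∏ k ∈ Finset.Icc 1 (j + 2), (2 ^ 2 ^ k + 1))
        = (∏ k ∈ Finset.Icc 1 (j + 1), (2 ^ 2 ^ k + 1)) * (2 ^ 2 ^ (j + 2) + 1) :=
      Finset.prod_Icc_succ_top (by omega) _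
    rw [hP, mul_comm, pow_mul, cN hc (j + 1)]
    exact APow hc j
  · have h := APow hc (j + 1)
    rwa [AA] at h
end

section
/- In the Artin-Schreier tower over F_p, for every i ≥ 0 the multiplicative orders of c_i and a_i are equal, except only when p = 2 and i = 1 (where O(c_1) = 15 and O(a_1) = 5). -/
open Finset
set_option linter.unusedSectionVars false

namespace ASProof

variable {K : Type*} [Field K] {p : ℕ} [hp : Fact p.Prime] [CharP K p]

/-- `b i = a_{i-1}` of the tower. -/
def bb (p : ℕ) (c : ℕ → K) (i : ℕ) : K := (∏ j ∈ range i, c j) ^ (p - 1)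

/-- trace of `bb i` over the prime field. -/
def sg (p : ℕ) (c : ℕ → K) (i : ℕ) : K := ∑ m ∈ range (p ^ i), bb p c i ^ p ^ m

/-- `tT p i = (q^p-1)/(q-1)` with `q = p^(p^i)`. -/
def tT (p i : ℕ) : ℕ := ∑ j ∈ range p, (p ^ p ^ i) ^ j

section tower

variable (c : ℕ → K) (hc : ∀ i, c i ^ p - c i = (∏ j ∈ range i, c j) ^ (p - 1))

lemma bb_zero : bb p c 0 = 1 := by simp [bb]

lemma bb_succ (i : ℕ) : bb p c (i + 1) = bb p c i * c i ^ (p - 1) := by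
  simp [bb, prod_range_succ, mul_pow]

include hc in
lemma c_pow_p (i : ℕ) : c i ^ p = c i + bb p c i := by
  have := hc i
  rw [sub_eq_iff_eq_add] at this
  rw [this, bb]; ring

include hc in
lemma bb_ne_zero (i : ℕ) : bb p c i ≠ 0 ∧ c i ≠ 0 := by
  induction i with
  | zero =>
    refine ⟨by rw [bb_zero]; exact one_ne_zero, fun h0 => ?_⟩
    have h := hc 0
    rw [h0] at h
    simp only [range_zero, prod_empty, one_pow] at h
    rw [zero_pow hp.out.ne_zero] at h
    simp at h
  | succ k ih =>
    have hb : bb p c (k+1) ≠ 0 := by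
      rw [bb_succ]
      exact mul_ne_zero ih.1 (pow_ne_zero _ ih.2)
    refine ⟨hb, fun h0 => ?_⟩
    have h := c_pow_p c hc (k+1)
    rw [h0, zero_pow hp.out.ne_zero] at h
    exact hb (by linear_combination -h)

include hc in
lemma c_ne_zero (i : ℕ) : c i ≠ 0 := (bb_ne_zero c hc i).2

include hc in
lemma bb_ne_zero' (i : ℕ) : bb p c i ≠ 0 := (bb_ne_zero c hc i).1

include hc in
lemma c_pow_pow (i k : ℕ) :
    c i ^ p ^ k = c i + ∑ m ∈ range k, bb p c i ^ p ^ m := by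
  induction k with
  | zero => simp
  | succ k ih =>
    have : c i ^ p ^ (k+1) = (c i ^ p ^ k) ^ p := by
      rw [← pow_mul, pow_succ]
    rw [this, ih, add_pow_char, sum_pow_char, c_pow_p c hc]
    rw [Finset.sum_range_succ' (fun m => bb p c i ^ p ^ m) k]
    simp only [pow_zero, pow_one]
    have : ∀ m, (bb p c i ^ p ^ m) ^ p = bb p c i ^ p ^ (m+1) := by
      intro m; rw [← pow_mul, pow_succ]
    rw [Finset.sum_congr rfl fun m _ => this m]
    ring

/-- iterate fixedness -/
lemma pow_p_pow_mul {x : K} {t : ℕ} (hx : x ^ p ^ t = x) (l : ℕ) :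
    x ^ p ^ (l * t) = x := by
  induction l with
  | zero => simp
  | succ l ih =>
    have : p ^ ((l+1) * t) = p ^ (l*t) * p ^ t := by
      rw [← pow_add]; ring_nf
    rw [this, pow_mul, ih, hx]

lemma sum_trace_block {x : K} {t : ℕ} (hx : x ^ p ^ t = x) (l : ℕ) :
    ∑ m ∈ range (l * t), x ^ p ^ m = l • (∑ m ∈ range t, x ^ p ^ m) := by
  induction l with
  | zero => simp
  | succ l ih =>
    have h1 : (l+1) * t = l * t + t := by ring
    rw [h1, Finset.sum_range_add, ih, succ_nsmul]
    congr 1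
    refine Finset.sum_congr rfl fun m _ => ?_
    have h2 : x ^ p ^ (l * t + m) = (x ^ p ^ (l * t)) ^ p ^ m := by
      rw [← pow_mul, ← pow_add]
    rw [h2, pow_p_pow_mul hx]

include hc in
lemma frob_fix (i : ℕ) :
    bb p c i ^ p ^ p ^ i = bb p c i ∧ c i ^ p ^ p ^ (i+1) = c i := by
  induction i with
  | zero =>
    constructor
    · rw [bb_zero]; simp
    · have hfix : bb p c 0 ^ p ^ 1 = bb p c 0 := by rw [bb_zero]; simp
      have h := c_pow_pow c hc 0 (p ^ 1)
      rw [h]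
      have hblock := sum_trace_block hfix (p ^ 1)
      rw [mul_one] at hblock
      rw [hblock, nsmul_eq_mul]
      have hp0 : ((p ^ 1 : ℕ) : K) = 0 := by
        push_cast
        rw [pow_one, CharP.cast_eq_zero K p]
      rw [hp0, zero_mul, add_zero]
  | succ i ih =>
    have hb : bb p c (i+1) ^ p ^ p ^ (i+1) = bb p c (i+1) := by
      rw [bb_succ, mul_pow]
      have e1 : bb p c i ^ p ^ p ^ (i+1) = bb p c i := by
        have : p ^ (i+1) = p * p ^ i := by ring
        rw [this]; exact pow_p_pow_mul ih.1 p
      have e2 : (c i ^ (p-1)) ^ p ^ p ^ (i+1) = c i ^ (p-1) := by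
        rw [← pow_mul, mul_comm, pow_mul, ih.2]
      rw [e1, e2]
    refine ⟨hb, ?_⟩
    rw [c_pow_pow c hc (i+1) (p ^ (i+2))]
    have h2 : p ^ (i+2) = p * p ^ (i+1) := by ring
    rw [h2, sum_trace_block hb p, nsmul_eq_mul, CharP.cast_eq_zero K p]
    ring

include hc in
lemma bb_fix (i : ℕ) : bb p c i ^ p ^ p ^ i = bb p c i := (frob_fix c hc i).1

include hc in
lemma c_fix (i : ℕ) : c i ^ p ^ p ^ (i+1) = c i := (frob_fix c hc i).2

include hc in
lemma c_conj (i j : ℕ) :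
    c i ^ (p ^ p ^ i) ^ j = c i + (j : K) * sg p c i := by
  rw [← pow_mul, mul_comm (p ^ i) j, c_pow_pow c hc,
    sum_trace_block (bb_fix c hc i) j, nsmul_eq_mul, sg]

include hc in
lemma sg_pow_p (i : ℕ) : sg p c i ^ p = sg p c i := by
  have h1 : ∑ m ∈ range (p ^ i + 1), bb p c i ^ p ^ m
      = sg p c i + bb p c i ^ p ^ p ^ i := by
    rw [Finset.sum_range_succ]; rfl
  have h2 : ∑ m ∈ range (p ^ i + 1), bb p c i ^ p ^ m
      = bb p c i + sg p c i ^ p := by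
    rw [Finset.sum_range_succ' (fun m => bb p c i ^ p ^ m) (p ^ i)]
    simp only [pow_zero, pow_one]
    rw [sg, sum_pow_char]
    have he : ∀ m ∈ range (p ^ i), (bb p c i ^ p ^ m) ^ p = bb p c i ^ p ^ (m+1) := by
      intro m _; rw [← pow_mul, ← pow_succ]
    rw [Finset.sum_congr rfl he]
    ring
  rw [bb_fix c hc] at h1
  have := h1.symm.trans h2
  linear_combination -this

end tower

end ASProof
section zmodlem

open Finset Polynomial

variable {K : Type*} [Field K] {p : ℕ} [hp : Fact p.Prime] [CharP K p]

namespace ASProof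

lemma sum_range_zmod {M : Type*} [AddCommMonoid M] (g : ZMod p → M) :
    ∑ j ∈ range p, g ((j : ℕ) : ZMod p) = ∑ u : ZMod p, g u := by
  haveI : NeZero p := ⟨hp.out.ne_zero⟩
  refine Finset.sum_nbij' (fun j => ((j : ℕ) : ZMod p)) (fun u => u.val) ?_ ?_ ?_ ?_ ?_
  · intro a _; exact Finset.mem_univ _
  · intro u _; exact Finset.mem_range.mpr (ZMod.val_lt u)
  · intro a ha; exact ZMod.val_cast_of_lt (Finset.mem_range.mp ha)
  · intro u _; exact ZMod.natCast_rightInverse u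
  · intro a _; rfl

lemma prod_range_zmod {M : Type*} [CommMonoid M] (g : ZMod p → M) :
    ∏ j ∈ range p, g ((j : ℕ) : ZMod p) = ∏ u : ZMod p, g u := by
  haveI : NeZero p := ⟨hp.out.ne_zero⟩
  refine Finset.prod_nbij' (fun j => ((j : ℕ) : ZMod p)) (fun u => u.val) ?_ ?_ ?_ ?_ ?_
  · intro a _; exact Finset.mem_univ _
  · intro u _; exact Finset.mem_range.mpr (ZMod.val_lt u)
  · intro a ha; exact ZMod.val_cast_of_lt (Finset.mem_range.mp ha)
  · intro u _; exact ZMod.natCast_rightInverse u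
  · intro a _; rfl

lemma zmod_pow_sum_lt (m : ℕ) (hm : m < p - 1) : ∑ u : ZMod p, u ^ m = 0 := by
  haveI : NeZero p := ⟨hp.out.ne_zero⟩
  have := FiniteField.sum_pow_lt_card_sub_one (ZMod p) m (by rwa [ZMod.card])
  exact this

lemma zmod_pow_sum_top : ∑ u : ZMod p, u ^ (p - 1) = -1 := by
  haveI : NeZero p := ⟨hp.out.ne_zero⟩
  classical
  have h0 : (0 : ZMod p) ^ (p - 1) = 0 :=
    zero_pow (Nat.sub_ne_zero_of_lt hp.out.one_lt)
  rw [← Finset.sum_erase_add _ _ (Finset.mem_univ (0 : ZMod p)), h0, add_zero]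
  have hone : ∀ u ∈ Finset.univ.erase (0 : ZMod p), u ^ (p - 1) = 1 := by
    intro u hu
    exact ZMod.pow_card_sub_one_eq_one (Finset.mem_erase.mp hu).1
  rw [Finset.sum_congr rfl hone, Finset.sum_const, Finset.card_erase_of_mem (Finset.mem_univ _),
    Finset.card_univ, ZMod.card, nsmul_eq_mul, mul_one]
  rw [Nat.cast_sub hp.out.one_le, Nat.cast_one, ZMod.natCast_self, zero_sub]

lemma zmod_prod_X_sub_C :
    ∏ u : ZMod p, (X - C u) = X ^ p - X := by
  haveI : NeZero p := ⟨hp.out.ne_zero⟩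
  classical
  have hq : Fintype.card (ZMod p) = p := ZMod.card p
  have h1 := FiniteField.roots_X_pow_card_sub_X (ZMod p)
  rw [hq] at h1
  have hmonic : (X ^ p - X : (ZMod p)[X]).Monic := by
    apply Polynomial.monic_X_pow_sub
    rw [Polynomial.degree_X]
    exact_mod_cast hp.out.one_lt
  have hdeg : (X ^ p - X : (ZMod p)[X]).natDegree = p := by
    have := FiniteField.X_pow_card_sub_X_natDegree_eq (ZMod p) hp.out.one_lt
    exact this
  have hcard : Multiset.card (X ^ p - X : (ZMod p)[X]).roots = (X ^ p - X : (ZMod p)[X]).natDegree := by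
    rw [h1, hdeg, ← Finset.card_def, Finset.card_univ, hq]
  have h2 := Polynomial.prod_multiset_X_sub_C_of_monic_of_roots_card_eq hmonic hcard
  rw [h1] at h2
  rw [← h2, Finset.prod_eq_multiset_prod]

lemma prod_sub_zmod (z : K) :
    ∏ u : ZMod p, (z - ZMod.castHom (dvd_refl p) K u) = z ^ p - z := by
  have h := congrArg (Polynomial.eval₂ (ZMod.castHom (dvd_refl p) K) z)
    (zmod_prod_X_sub_C (p := p))
  rw [Polynomial.eval₂_finset_prod] at h
  simp only [Polynomial.eval₂_sub, Polynomial.eval₂_X, Polynomial.eval₂_C,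
    Polynomial.eval₂_pow] at h
  exact h

lemma sum_conj_pow (x σ : K) (hσ : σ ≠ 0) (hσp : σ ^ p = σ) :
    ∑ j ∈ range p, (x + (j : K) * σ) ^ (p - 1) = -1 := by
  haveI : NeZero p := ⟨hp.out.ne_zero⟩
  classical
  have hσ1 : σ ^ (p - 1) = 1 := by
    have h : σ ^ (p - 1) * σ = 1 * σ := by
      rw [one_mul, ← pow_succ, Nat.sub_add_cancel hp.out.one_le, hσp]
    exact mul_right_cancel₀ hσ h
  set φ := ZMod.castHom (dvd_refl p) K with hφ
  have hre : ∑ j ∈ range p, (x + (j : K) * σ) ^ (p - 1)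
      = ∑ u : ZMod p, (x + φ u * σ) ^ (p - 1) := by
    rw [← sum_range_zmod (fun u => (x + φ u * σ) ^ (p - 1))]
    exact Finset.sum_congr rfl fun j _ => by rw [map_natCast]
  rw [hre]
  have hexp : ∀ u : ZMod p, (x + φ u * σ) ^ (p - 1)
      = ∑ k ∈ range p, x ^ k * (φ u ^ (p - 1 - k) * σ ^ (p - 1 - k)) * ((p - 1).choose k : K) := by
    intro u
    rw [add_pow]
    rw [show p - 1 + 1 = p from Nat.sub_add_cancel hp.out.one_le]
    exact Finset.sum_congr rfl fun k _ => by rw [mul_pow]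
  rw [Finset.sum_congr rfl fun u _ => hexp u, Finset.sum_comm]
  have hterm : ∀ k ∈ range p,
      (∑ u : ZMod p, x ^ k * (φ u ^ (p - 1 - k) * σ ^ (p - 1 - k)) * ((p - 1).choose k : K))
      = if k = 0 then -1 else 0 := by
    intro k hk
    have hpull : ∑ u : ZMod p, x ^ k * (φ u ^ (p - 1 - k) * σ ^ (p - 1 - k)) * ((p - 1).choose k : K)
        = x ^ k * σ ^ (p - 1 - k) * ((p - 1).choose k : K) * φ (∑ u : ZMod p, u ^ (p - 1 - k)) := by
      rw [map_sum, Finset.mul_sum]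
      exact Finset.sum_congr rfl fun u _ => by rw [map_pow]; ring
    rw [hpull]
    by_cases hk0 : k = 0
    · subst hk0
      rw [Nat.sub_zero, zmod_pow_sum_top, map_neg, map_one]
      simp [hσ1]
    · have hklt : p - 1 - k < p - 1 := by
        have hk2 := Finset.mem_range.mp hk
        have := hp.out.one_lt
        omega
      rw [zmod_pow_sum_lt _ hklt, map_zero, mul_zero, if_neg hk0]
  rw [Finset.sum_congr rfl hterm, Finset.sum_ite_eq' (range p) 0 (fun _ => (-1 : K))]
  simp [hp.out.pos]

lemma prod_conj (x σ : K) (hσ : σ ≠ 0) (hσp : σ ^ p = σ) :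
    ∏ j ∈ range p, (x + (j : K) * σ) = x ^ p - x := by
  haveI : NeZero p := ⟨hp.out.ne_zero⟩
  classical
  set φ := ZMod.castHom (dvd_refl p) K with hφ
  have hre : ∏ j ∈ range p, (x + (j : K) * σ) = ∏ u : ZMod p, (x + φ u * σ) := by
    rw [← prod_range_zmod (fun u => x + φ u * σ)]
    exact Finset.prod_congr rfl fun j _ => by rw [map_natCast]
  rw [hre]
  have hneg : ∏ u : ZMod p, (x + φ u * σ) = ∏ u : ZMod p, (x - φ u * σ) := by
    refine Fintype.prod_equiv (Equiv.neg (ZMod p)) _ _ fun u => ?_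
    rw [Equiv.neg_apply, map_neg]
    ring
  rw [hneg]
  have hfac : ∀ u : ZMod p, x - φ u * σ = σ * (x / σ - φ u) := by
    intro u
    rw [mul_sub, mul_div_cancel₀ x hσ, mul_comm (φ u) σ]
  rw [Finset.prod_congr rfl fun u _ => hfac u, Finset.prod_mul_distrib, Finset.prod_const,
    Finset.card_univ, ZMod.card, prod_sub_zmod]
  rw [mul_sub, ← mul_pow, mul_div_cancel₀ x hσ]
  congr 1
  rw [hσp, mul_div_cancel₀ x hσ]

end ASProof
end zmodlem
section tower2

open Finset

namespace ASProof

variable {K : Type*} [Field K] {p : ℕ} [hp : Fact p.Prime] [CharP K p]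
variable (c : ℕ → K) (hc : ∀ i, c i ^ p - c i = (∏ j ∈ range i, c j) ^ (p - 1))

lemma sum_mul_block {M : Type*} [AddCommMonoid M] (g : ℕ → M) (l t : ℕ) :
    ∑ j ∈ range (l * t), g j = ∑ q ∈ range l, ∑ m ∈ range t, g (q * t + m) := by
  induction l with
  | zero => simp
  | succ l ih =>
    have h : (l + 1) * t = l * t + t := by ring
    rw [h, Finset.sum_range_add, ih, Finset.sum_range_succ]

include hc in
lemma sig_spec (i : ℕ) : sg p c i = (-1 : K) ^ i := by
  induction i with
  | zero => simp [sg, bb_zero]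
  | succ i ih =>
    have hσne : sg p c i ≠ 0 := by
      rw [ih]; exact pow_ne_zero _ (neg_ne_zero.mpr one_ne_zero)
    have hσp := sg_pow_p c hc i
    have key : sg p c (i+1) = - sg p c i := by
      have h1 : sg p c (i+1) = ∑ j ∈ range (p * p ^ i), bb p c (i+1) ^ p ^ j := by
        rw [sg, pow_succ, mul_comm]
      rw [h1, sum_mul_block (fun j => bb p c (i+1) ^ p ^ j) p (p ^ i), Finset.sum_comm]
      have hR : ∀ m ∈ range (p ^ i), (∑ q ∈ range p, bb p c (i+1) ^ p ^ (q * p ^ i + m))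
          = (- bb p c i) ^ p ^ m := by
        intro m _
        have e1 : ∀ q, bb p c (i+1) ^ p ^ (q * p ^ i + m)
            = (bb p c (i+1) ^ p ^ (q * p ^ i)) ^ p ^ m := fun q => by
          rw [← pow_mul, ← pow_add]
        rw [Finset.sum_congr rfl fun q _ => e1 q, ← sum_pow_char_pow]
        congr 1
        have e2 : ∀ q, bb p c (i+1) ^ p ^ (q * p ^ i)
            = bb p c i * (c i + (q : K) * sg p c i) ^ (p - 1) := by
          intro q
          rw [bb_succ, mul_pow]
          congr 1
          · exact pow_p_pow_mul (bb_fix c hc i) q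
          · rw [← pow_mul, mul_comm (p-1) (p ^ (q * p ^ i)), pow_mul]
            congr 1
            have hx : p ^ (q * p ^ i) = (p ^ p ^ i) ^ q := by
              rw [← pow_mul, mul_comm]
            rw [hx, c_conj c hc i q]
        rw [Finset.sum_congr rfl fun q _ => e2 q, ← Finset.mul_sum,
          sum_conj_pow (c i) (sg p c i) hσne hσp, mul_neg_one]
      rw [Finset.sum_congr rfl hR]
      have e3 : ∀ m, (- bb p c i) ^ p ^ m = -(bb p c i ^ p ^ m) := by
        intro m
        have h := map_neg (iterateFrobenius K p m) (bb p c i)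
        rwa [iterateFrobenius_def, iterateFrobenius_def] at h
      rw [Finset.sum_congr rfl fun m _ => e3 m, Finset.sum_neg_distrib]
      rw [sg]
    rw [key, ih, pow_succ]
    ring

include hc in
lemma sg_ne_zero (i : ℕ) : sg p c i ≠ 0 := by
  rw [sig_spec c hc]; exact pow_ne_zero _ (neg_ne_zero.mpr one_ne_zero)

include hc in
lemma c_pow_T (i : ℕ) : c i ^ tT p i = bb p c i := by
  rw [tT, ← Finset.prod_pow_eq_pow_sum,
    Finset.prod_congr rfl fun j _ => c_conj c hc i j,
    prod_conj (c i) (sg p c i) (sg_ne_zero c hc i) (sg_pow_p c hc i)]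
  linear_combination c_pow_p c hc i

include hc in
lemma bb_eq_c_pow (i : ℕ) : bb p c (i+1) = c i ^ (tT p i + (p - 1)) := by
  rw [pow_add, c_pow_T c hc, bb_succ]

include hc in
lemma orderOf_c_pos (i : ℕ) : 0 < orderOf (c i) := by
  have hgt : 2 ≤ p ^ p ^ (i+1) :=
    le_trans hp.out.two_le (Nat.le_self_pow (Nat.pos_of_ne_zero (pow_ne_zero _ hp.out.ne_zero)).ne' p)
  have h1 : c i ^ (p ^ p ^ (i+1) - 1) = 1 := by
    have h : c i ^ (p ^ p ^ (i+1) - 1) * c i = 1 * c i := by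
      rw [one_mul, ← pow_succ, Nat.sub_add_cancel (le_trans one_le_two hgt), c_fix c hc]
    exact mul_right_cancel₀ (c_ne_zero c hc i) h
  exact (isOfFinOrder_iff_pow_eq_one.mpr
    ⟨_, by omega, h1⟩).orderOf_pos

include hc in
lemma orderOf_bb_dvd (i : ℕ) : orderOf (bb p c (i+1)) ∣ orderOf (c i) := by
  apply orderOf_dvd_of_pow_eq_one
  rw [bb_eq_c_pow c hc, ← pow_mul, mul_comm, pow_mul, pow_orderOf_eq_one, one_pow]

include hc in
lemma orderOf_c_dvd (i : ℕ) : orderOf (c i) ∣ tT p i * orderOf (bb p c i) := by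
  apply orderOf_dvd_of_pow_eq_one
  rw [pow_mul, c_pow_T c hc, pow_orderOf_eq_one]

include hc in
lemma orderOf_c_dvd_prod (i : ℕ) : orderOf (c i) ∣ ∏ k ∈ range (i+1), tT p k := by
  induction i with
  | zero =>
    have h := orderOf_c_dvd c hc 0
    rw [bb_zero, orderOf_one, mul_one] at h
    simpa using h
  | succ i ih =>
    have h2 : orderOf (bb p c (i+1)) ∣ ∏ k ∈ range (i+1), tT p k :=
      dvd_trans (orderOf_bb_dvd c hc i) ih
    calc orderOf (c (i+1)) ∣ tT p (i+1) * orderOf (bb p c (i+1)) := orderOf_c_dvd c hc (i+1)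
      _ ∣ tT p (i+1) * ∏ k ∈ range (i+1), tT p k := mul_dvd_mul_left _ h2
      _ = ∏ k ∈ range (i+2), tT p k := by
          rw [mul_comm]; exact (Finset.prod_range_succ _ (i+1)).symm

end ASProof
end tower2
section numtheory

open Finset

namespace ASProof

lemma tT_cast (p k r : ℕ) : ((tT p k : ℕ) : ZMod r) = ∑ j ∈ range p, ((p : ZMod r) ^ p ^ k) ^ j := by
  rw [tT]
  push_cast
  rfl

lemma key_nt {p : ℕ} (hpp : p.Prime) {i r : ℕ} (hr : r.Prime)
    (h1 : r ∣ ∏ k ∈ range (i+1), tT p k)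
    (h2 : r ∣ tT p i + (p - 1)) :
    p = 2 ∧ r = 3 ∧ 1 ≤ i := by
  haveI : Fact r.Prime := ⟨hr⟩
  haveI : NeZero r := ⟨hr.ne_zero⟩
  obtain ⟨k, hk, hdvd⟩ := hr.prime.exists_mem_finset_dvd h1
  rw [Finset.mem_range] at hk
  set x : ZMod r := (p : ZMod r) with hx
  have hTk : (∑ j ∈ range p, (x ^ p ^ k) ^ j) = 0 := by
    rw [← tT_cast]
    exact (ZMod.natCast_eq_zero_iff _ _).mpr hdvd
  have hx0 : x ≠ 0 := by
    intro h0
    rw [h0] at hTk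
    rw [zero_pow (pow_ne_zero _ hpp.ne_zero)] at hTk
    rw [Finset.sum_eq_single_of_mem 0 (Finset.mem_range.mpr hpp.pos)
      (fun j _ hj => zero_pow hj), pow_zero] at hTk
    exact one_ne_zero hTk
  have hy1 : x ^ p ^ k ≠ 1 := by
    intro hy
    rw [hy] at hTk
    simp only [one_pow, Finset.sum_const, Finset.card_range, nsmul_eq_mul, mul_one] at hTk
    exact hx0 (hx ▸ hTk)
  have hyp : (x ^ p ^ k) ^ p = 1 := by
    have := geom_sum_mul (x ^ p ^ k) p
    rw [hTk, zero_mul] at this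
    have h := this.symm
    rw [sub_eq_zero] at h
    exact h
  have hxord : orderOf x = p ^ (k+1) := by
    have hdvd1 : orderOf x ∣ p ^ (k+1) := by
      apply orderOf_dvd_of_pow_eq_one
      rw [pow_succ, pow_mul]
      exact hyp
    obtain ⟨m, hm, he⟩ := (Nat.dvd_prime_pow hpp).mp hdvd1
    have hnotk : ¬ m ≤ k := by
      intro hle
      apply hy1
      apply orderOf_dvd_iff_pow_eq_one.mp
      rw [he]
      exact pow_dvd_pow p hle
    have : m = k + 1 := by omega
    rw [he, this]
  have hki : k ≠ i := by
    intro hke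
    subst hke
    have hd : r ∣ p - 1 := by
      have := Nat.dvd_sub h2 hdvd
      rwa [Nat.add_sub_cancel_left] at this
    have hp1 : ((p - 1 : ℕ) : ZMod r) = 0 := (ZMod.natCast_eq_zero_iff _ _).mpr hd
    have hxone : x = 1 := by
      have : ((p - 1 : ℕ) : ZMod r) = x - 1 := by
        rw [Nat.cast_sub hpp.one_le, Nat.cast_one, hx]
      rw [this] at hp1
      linear_combination hp1
    exact hy1 (by rw [hxone, one_pow])
  have hklt : k < i := lt_of_le_of_ne (by omega) hki
  have hxi : x ^ p ^ i = 1 := by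
    apply orderOf_dvd_iff_pow_eq_one.mp
    rw [hxord]
    exact pow_dvd_pow p (show k + 1 ≤ i by omega)
  have hTi : ((tT p i : ℕ) : ZMod r) = (p : ZMod r) := by
    rw [tT_cast, hxi]
    simp
  have h2p1 : r ∣ 2 * p - 1 := by
    rw [← ZMod.natCast_eq_zero_iff]
    have hcast : ((tT p i + (p - 1) : ℕ) : ZMod r) = 0 :=
      (ZMod.natCast_eq_zero_iff _ _).mpr h2
    rw [Nat.cast_add, hTi, Nat.cast_sub hpp.one_le, Nat.cast_one] at hcast
    have : ((2 * p - 1 : ℕ) : ZMod r) = 2 * (p : ZMod r) - 1 := by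
      rw [Nat.cast_sub (by have := hpp.two_le; omega), Nat.cast_mul, Nat.cast_ofNat, Nat.cast_one]
    rw [this]
    linear_combination hcast
  have hrle : r ≤ 2 * p - 1 := Nat.le_of_dvd (by have := hpp.two_le; omega) h2p1
  have hordr : p ^ (k+1) ∣ r - 1 := by
    rw [← hxord]
    apply orderOf_dvd_of_pow_eq_one
    exact ZMod.pow_card_sub_one_eq_one hx0
  have hple : p ^ (k+1) ≤ r - 1 :=
    Nat.le_of_dvd (by have := hr.two_le; omega) hordr
  have hp2 := hpp.two_le
  have hr2 := hr.two_le
  have hk0 : k = 0 := by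
    by_contra hk0
    have hsq : p * p ≤ p ^ (k+1) := by
      have h := Nat.pow_le_pow_right hpp.pos (show 2 ≤ k + 1 by omega)
      rwa [pow_two] at h
    have h4 : p * p ≤ r - 1 := le_trans hsq hple
    have h5 : 2 * p ≤ p * p := Nat.mul_le_mul_right p hp2
    have e1 : p * p + 1 ≤ r := by
      have h6 := Nat.add_le_add_right h4 1
      rwa [Nat.sub_add_cancel (show 1 ≤ r by omega)] at h6
    have e2 : p * p + 1 ≤ 2 * p - 1 := le_trans e1 hrle
    have e3 : p * p + 2 ≤ 2 * p := by
      have h7 := Nat.add_le_add_right e2 1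
      rwa [Nat.sub_add_cancel (show 1 ≤ 2 * p by omega)] at h7
    linarith
  subst hk0
  rw [pow_one] at hordr hple
  have hrp1 : r = p + 1 := by
    obtain ⟨t, ht⟩ := hordr
    have ht0 : t ≠ 0 := by
      rintro rfl
      rw [mul_zero] at ht
      omega
    have ht2 : t < 2 := by
      by_contra h
      have h2t : 2 ≤ t := by omega
      have hge : 2 * p ≤ p * t := by
        calc 2 * p = p * 2 := by ring
        _ ≤ p * t := Nat.mul_le_mul_left p h2t
      rw [← ht] at hge
      omega
    have ht1 : t = 1 := by omega
    rw [ht1, mul_one] at ht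
    omega
  have h3 : r ∣ 3 := by
    have ha : r ∣ 2 * r := dvd_mul_left r 2
    have hb : 2 * r - (2 * p - 1) = 3 := by omega
    have := Nat.dvd_sub ha h2p1
    rwa [hb] at this
  have hr3 : r = 3 := by
    rcases (Nat.Prime.eq_one_or_self_of_dvd Nat.prime_three r h3) with h | h
    · omega
    · omega
  refine ⟨by omega, hr3, by omega⟩

end ASProof
end numtheory
section ptwo

open Finset

namespace ASProof

lemma tT20 : tT 2 0 = 3 := by norm_num [tT, Finset.sum_range_succ]

lemma tT21 : tT 2 1 = 5 := by norm_num [tT, Finset.sum_range_succ]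

lemma three_not_dvd_tT (i : ℕ) (hi : 1 ≤ i) : ¬ (3 ∣ tT 2 i) := by
  intro h
  have hcast : ((tT 2 i : ℕ) : ZMod 3) = 0 := (ZMod.natCast_eq_zero_iff _ _).mpr h
  rw [tT_cast] at hcast
  have h2 : ((2 : ℕ) : ZMod 3) = -1 := by decide
  rw [h2] at hcast
  have he : Even (2 ^ i) := (Nat.even_pow).mpr ⟨even_two, by omega⟩
  rw [he.neg_one_pow] at hcast
  rw [Finset.sum_range_succ, Finset.sum_range_succ] at hcast
  simp only [Finset.sum_range_zero, zero_add, pow_zero, pow_one] at hcast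
  exact absurd hcast (by decide)

variable {K : Type*} [Field K] [CharP K 2]
variable (c : ℕ → K) (hc : ∀ i, c i ^ 2 - c i = (∏ j ∈ range i, c j) ^ (2 - 1))

include hc in
lemma p2_c0_cube : c 0 ^ 3 = 1 := by
  have h := c_pow_T c hc 0
  rwa [tT20, bb_zero] at h

include hc in
lemma p2_bb1 : bb 2 c 1 = c 0 ^ 4 := by
  have h := bb_eq_c_pow c hc 0
  rwa [tT20] at h

include hc in
lemma p2_c1_five : c 1 ^ 5 = c 0 ^ 4 := by
  have h := c_pow_T c hc 1
  rwa [tT21, p2_bb1 c hc] at h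

include hc in
lemma p2_bb2 : bb 2 c 2 = c 1 ^ 6 := by
  have h := bb_eq_c_pow c hc 1
  rwa [tT21] at h

include hc in
lemma p2_bb2_pow_five : bb 2 c 2 ^ 5 = 1 := by
  rw [p2_bb2 c hc, ← pow_mul]
  have h30 : (6 * 5 : ℕ) = 5 * 6 := by norm_num
  rw [h30, pow_mul, p2_c1_five c hc, ← pow_mul]
  have h24 : (4 * 6 : ℕ) = 3 * 8 := by norm_num
  rw [h24, pow_mul, p2_c0_cube c hc, one_pow]

include hc in
lemma p2_three_not_dvd_bb : ∀ j, ¬ (3 ∣ orderOf (bb 2 c (j + 2))) := by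
  intro j
  induction j with
  | zero =>
    intro h3
    have h5 : orderOf (bb 2 c 2) ∣ 5 := orderOf_dvd_of_pow_eq_one (p2_bb2_pow_five c hc)
    have : (3 : ℕ) ∣ 5 := dvd_trans h3 h5
    norm_num at this
  | succ j ih =>
    intro h3
    have hstep : orderOf (bb 2 c (j + 3)) ∣ tT 2 (j + 2) * orderOf (bb 2 c (j + 2)) :=
      dvd_trans (orderOf_bb_dvd c hc (j + 2)) (orderOf_c_dvd c hc (j + 2))
    have h33 := (Nat.Prime.dvd_mul Nat.prime_three).mp (dvd_trans h3 hstep)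
    rcases h33 with h | h
    · exact three_not_dvd_tT (j + 2) (by omega) h
    · exact ih h

include hc in
lemma p2_three_not_dvd_orderOf_c (i : ℕ) (hi : 2 ≤ i) : ¬ (3 ∣ orderOf (c i)) := by
  intro h3
  have hdvd : orderOf (c i) ∣ tT 2 i * orderOf (bb 2 c i) := orderOf_c_dvd c hc i
  have h33 := (Nat.Prime.dvd_mul Nat.prime_three).mp (dvd_trans h3 hdvd)
  rcases h33 with h | h
  · exact three_not_dvd_tT i (by omega) h
  · obtain ⟨j, rfl⟩ : ∃ j, i = j + 2 := ⟨i - 2, by omega⟩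
    exact p2_three_not_dvd_bb c hc j h

include hc in
lemma p2_orderOf_c0 : orderOf (c 0) = 3 := by
  have hdvd : orderOf (c 0) ∣ 3 := orderOf_dvd_of_pow_eq_one (p2_c0_cube c hc)
  have hne1 : c 0 ≠ 1 := by
    intro h1
    have h := hc 0
    rw [h1] at h
    simp at h
  rcases (Nat.dvd_prime Nat.prime_three).mp hdvd with h | h
  · exact absurd (orderOf_eq_one_iff.mp h) hne1
  · exact h

include hc in
lemma p2_c1_five' : c 1 ^ 5 = c 0 := by
  rw [p2_c1_five c hc]
  have : c 0 ^ 4 = c 0 ^ 3 * c 0 := by ring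
  rw [this, p2_c0_cube c hc, one_mul]

include hc in
lemma p2_orderOf_c1 : orderOf (c 1) = 15 := by
  have hpos := orderOf_c_pos c hc 1
  have hd15 : orderOf (c 1) ∣ 15 := by
    apply orderOf_dvd_of_pow_eq_one
    have : (15 : ℕ) = 5 * 3 := by norm_num
    rw [this, pow_mul, p2_c1_five' c hc, p2_c0_cube c hc]
  have h53 : orderOf (c 1) / Nat.gcd (orderOf (c 1)) 5 = 3 := by
    rw [← orderOf_pow' (c 1) (show (5:ℕ) ≠ 0 by norm_num), p2_c1_five' c hc,
      p2_orderOf_c0 c hc]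
  have hgcd : Nat.gcd (orderOf (c 1)) 5 ∣ 5 := Nat.gcd_dvd_right _ _
  rcases (Nat.dvd_prime (by norm_num : Nat.Prime 5)).mp hgcd with h | h
  · exfalso
    rw [h, Nat.div_one] at h53
    have hc13 : c 1 ^ 3 = 1 := h53 ▸ pow_orderOf_eq_one (c 1)
    have hc0eq : c 0 = c 1 ^ 2 := by
      have h5 := p2_c1_five' c hc
      have : c 1 ^ 5 = c 1 ^ 3 * c 1 ^ 2 := by ring
      rw [this, hc13, one_mul] at h5
      exact h5.symm
    have h1 := hc 1
    rw [Finset.prod_range_one] at h1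
    have : c 0 ^ (2 - 1) = c 0 := by norm_num
    rw [this, hc0eq] at h1
    have : c 1 = 0 := by linear_combination -h1
    exact c_ne_zero c hc 1 this
  · -- gcd = 5, so 5 ∣ orderOf (c 1), and orderOf (c 1) = 3 * gcd = 15
    have : orderOf (c 1) = 3 * Nat.gcd (orderOf (c 1)) 5 := by
      rw [← h53, Nat.div_mul_cancel (Nat.gcd_dvd_left _ _)]
    rw [h] at this
    omega

include hc in
lemma p2_orderOf_bb2 : orderOf (bb 2 c 2) = 5 := by
  rw [p2_bb2 c hc, orderOf_pow' (c 1) (show (6:ℕ) ≠ 0 by norm_num), p2_orderOf_c1 c hc]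
  decide

end ASProof
end ptwo
section mainsec

open Finset

namespace ASProof

variable {K : Type*} [Field K] {p : ℕ} [hp : Fact p.Prime] [CharP K p]
variable (c : ℕ → K) (hc : ∀ i, c i ^ p - c i = (∏ j ∈ range i, c j) ^ (p - 1))

lemma tT_pos (i : ℕ) : 0 < tT p i := by
  rw [tT]
  calc (0:ℕ) < (p ^ p ^ i) ^ 0 := by norm_num
  _ ≤ ∑ j ∈ range p, (p ^ p ^ i) ^ j :=
    Finset.single_le_sum (fun j _ => Nat.zero_le _) (Finset.mem_range.mpr hp.out.pos)

include hc in
lemma main_general (i : ℕ) (h3 : p = 2 → 1 ≤ i → ¬ (3 ∣ orderOf (c i))) :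
    orderOf (bb p c (i+1)) = orderOf (c i) := by
  have hcop : Nat.gcd (orderOf (c i)) (tT p i + (p - 1)) = 1 := by
    by_contra hg
    have hrp := Nat.minFac_prime hg
    have hrd : (Nat.gcd (orderOf (c i)) (tT p i + (p - 1))).minFac ∣ orderOf (c i) :=
      dvd_trans (Nat.minFac_dvd _) (Nat.gcd_dvd_left _ _)
    have hrt : (Nat.gcd (orderOf (c i)) (tT p i + (p - 1))).minFac ∣ tT p i + (p - 1) :=
      dvd_trans (Nat.minFac_dvd _) (Nat.gcd_dvd_right _ _)
    obtain ⟨hp2, hr3, hi1⟩ := key_nt hp.out hrp (dvd_trans hrd (orderOf_c_dvd_prod c hc i)) hrt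
    exact h3 hp2 hi1 (hr3 ▸ hrd)
  have hne : tT p i + (p - 1) ≠ 0 := by
    have := tT_pos (p := p) i
    omega
  rw [bb_eq_c_pow c hc i, orderOf_pow' (c i) hne, hcop, Nat.div_one]

end ASProof
end mainsec

theorem orderOf_c_eq_orderOf_a (p : ℕ) [Fact p.Prime]
    (c : ℕ → AlgebraicClosure (ZMod p))
    (hc : ∀ i, c i ^ p - c i = (∏ j ∈ Finset.range i, c j) ^ (p - 1))
    (i : ℕ) :
    (¬(p = 2 ∧ i = 1) →
      orderOf (c i) = orderOf ((∏ j ∈ Finset.range (i + 1), c j) ^ (p - 1))) ∧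
    ((p = 2 ∧ i = 1) →
      orderOf (c i) = 15 ∧
      orderOf ((∏ j ∈ Finset.range (i + 1), c j) ^ (p - 1)) = 5) := by
  constructor
  · intro hne
    have hbb : (∏ j ∈ Finset.range (i + 1), c j) ^ (p - 1) = ASProof.bb p c (i+1) := rfl
    rw [hbb]
    refine (ASProof.main_general c hc i ?_).symm
    intro hp2 hi1
    subst hp2
    have hnei : i ≠ 1 := fun h => hne ⟨rfl, h⟩
    exact ASProof.p2_three_not_dvd_orderOf_c c hc i (by omega)
  · rintro ⟨hp2, hi1⟩
    subst hp2; subst hi1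
    exact ⟨ASProof.p2_orderOf_c1 c hc, ASProof.p2_orderOf_bb2 c hc⟩
end

section
/- In the Artin-Schreier tower over F_p, for every i ≥ 0 both c_i and a_i have degree p^(i+1) over F_p. -/
open Finset Polynomial IntermediateField

section Aux

lemma nat_dvd_of_pow_sub_one_dvd {p d n : ℕ} (hp : 2 ≤ p) (hd : 0 < d)
    (h : p ^ d - 1 ∣ p ^ n - 1) : d ∣ n := by
  induction n using Nat.strong_induction_on with
  | _ n ih =>
    rcases lt_or_ge n d with hlt | hle
    · have hpn : 1 ≤ p ^ n := Nat.one_le_pow _ _ (by omega)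
      have hlt2 : p ^ n < p ^ d := Nat.pow_lt_pow_right (by omega) hlt
      have h0 : p ^ n - 1 = 0 := Nat.eq_zero_of_dvd_of_lt h (by omega)
      have hn0 : n = 0 := by
        by_contra hn
        have : p ^ 1 ≤ p ^ n := Nat.pow_le_pow_right (by omega) (by omega)
        simp only [pow_one] at this
        omega
      simp [hn0]
    · have h1 : 1 ≤ p ^ (n - d) := Nat.one_le_pow _ _ (by omega)
      have hle2 : p ^ (n - d) ≤ p ^ n := Nat.pow_le_pow_right (by omega) (by omega)
      have e1 : p ^ (n - d) * (p ^ d - 1) = p ^ n - p ^ (n - d) := by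
        rw [Nat.mul_sub, mul_one, ← pow_add]
        congr 2
        omega
      have h2 : p ^ d - 1 ∣ p ^ n - p ^ (n - d) := ⟨p ^ (n - d), by rw [mul_comm]; exact e1.symm⟩
      have h3 := Nat.dvd_sub h h2
      have e2 : p ^ n - 1 - (p ^ n - p ^ (n - d)) = p ^ (n - d) - 1 := by omega
      rw [e2] at h3
      have hnd : d ∣ n - d := by
        rcases Nat.eq_or_lt_of_le hle with heq | hlt'
        · simp [← heq]
        · exact ih (n - d) (by omega) h3
      have : n = (n - d) + d := by omega
      rw [this]
      exact Nat.dvd_add hnd dvd_rfl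

end Aux


variable {p : ℕ} [Fact p.Prime]

lemma pow_pow_eq_iff (x : AlgebraicClosure (ZMod p)) (n : ℕ) :
    x ^ p ^ n = x ↔ (minpoly (ZMod p) x).natDegree ∣ n := by
  have hp : p.Prime := Fact.out
  have hx : IsIntegral (ZMod p) x := Algebra.IsIntegral.isIntegral x
  set d := (minpoly (ZMod p) x).natDegree with hd
  have hd0 : 0 < d := minpoly.natDegree_pos hx
  haveI := IntermediateField.adjoin.finiteDimensional hx
  haveI : Finite ((ZMod p)⟮x⟯) := Module.finite_of_finite (ZMod p)
  haveI : Fintype ((ZMod p)⟮x⟯) := Fintype.ofFinite _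
  have hcard : Fintype.card ((ZMod p)⟮x⟯) = p ^ d := by
    rw [Module.card_eq_pow_finrank (K := ZMod p), ZMod.card, IntermediateField.adjoin.finrank hx]
  have hmem : x ∈ (ZMod p)⟮x⟯ := IntermediateField.mem_adjoin_simple_self (ZMod p) x
  have hxd : x ^ p ^ d = x := by
    have h1 : (⟨x, hmem⟩ : (ZMod p)⟮x⟯) ^ p ^ d = ⟨x, hmem⟩ := by
      rw [← hcard]; exact FiniteField.pow_card _
    have := congrArg Subtype.val h1
    simpa using this
  constructor
  · intro h
    have hall : ∀ y ∈ (ZMod p)⟮x⟯, y ^ p ^ n = y := by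
      intro y hy
      induction hy using IntermediateField.adjoin_induction with
      | mem z hz => rw [Set.mem_singleton_iff] at hz; rw [hz]; exact h
      | algebraMap z => rw [← map_pow, ZMod.pow_card_pow]
      | add a b _ _ ha hb => rw [add_pow_char_pow, ha, hb]
      | inv a _ ha => rw [inv_pow, ha]
      | mul a b _ _ ha hb => rw [mul_pow, ha, hb]
    classical
    haveI : Fintype ((ZMod p)⟮x⟯)ˣ := Fintype.ofFinite _
    obtain ⟨g, hg⟩ := IsCyclic.exists_generator (α := ((ZMod p)⟮x⟯)ˣ)
    have horder : orderOf g = p ^ d - 1 := by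
      rw [orderOf_eq_card_of_forall_mem_zpowers hg, Nat.card_units,
        Nat.card_eq_fintype_card, hcard]
    have hgE : ((g : (ZMod p)⟮x⟯) : AlgebraicClosure (ZMod p)) ^ p ^ n
        = ((g : (ZMod p)⟮x⟯) : AlgebraicClosure (ZMod p)) := hall _ (g : (ZMod p)⟮x⟯).2
    have hg2 : (g : (ZMod p)⟮x⟯) ^ p ^ n = (g : (ZMod p)⟮x⟯) := by
      apply Subtype.ext
      simpa using hgE
    have hg3 : g ^ p ^ n = g := Units.ext (by rw [Units.val_pow_eq_pow_val]; exact hg2)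
    have hpn1 : 1 ≤ p ^ n := Nat.one_le_pow _ _ hp.pos
    have hg4 : g ^ (p ^ n - 1) = 1 := by
      have h5 : g ^ (p ^ n - 1) * g = 1 * g := by
        rw [one_mul, ← pow_succ, (by omega : p ^ n - 1 + 1 = p ^ n), hg3]
      exact mul_right_cancel h5
    have hdvd : p ^ d - 1 ∣ p ^ n - 1 := horder ▸ orderOf_dvd_of_pow_eq_one hg4
    exact nat_dvd_of_pow_sub_one_dvd hp.two_le hd0 hdvd
  · rintro ⟨m, rfl⟩
    clear hd
    induction m with
    | zero => simp
    | succ m ih =>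
      rw [Nat.mul_succ, pow_add, pow_mul, ih, hxd]

lemma zmod_sum_pow : ∑ z : ZMod p, z ^ (p - 1) = -1 := by
  classical
  have hp : p.Prime := Fact.out
  have h2 : 2 ≤ p := hp.two_le
  rw [← Finset.add_sum_erase _ _ (Finset.mem_univ (0 : ZMod p)),
    zero_pow (by omega : p - 1 ≠ 0), zero_add,
    Finset.sum_congr rfl (fun z hz => ZMod.pow_card_sub_one_eq_one (Finset.ne_of_mem_erase hz)),
    Finset.sum_const, Finset.card_erase_of_mem (Finset.mem_univ _), Finset.card_univ, ZMod.card,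
    nsmul_eq_mul, mul_one, Nat.cast_sub hp.one_le, ZMod.natCast_self, Nat.cast_one, zero_sub]

lemma sum_univ_shift (y : AlgebraicClosure (ZMod p)) :
    ∑ z : ZMod p, (y + algebraMap (ZMod p) (AlgebraicClosure (ZMod p)) z) ^ (p - 1) = -1 := by
  classical
  have hp : p.Prime := Fact.out
  have h2 : 2 ≤ p := hp.two_le
  set ι := algebraMap (ZMod p) (AlgebraicClosure (ZMod p)) with hι
  have h1 : p - 1 + 1 = p := by omega
  have expand : ∀ z : ZMod p, (y + ι z) ^ (p - 1)
      = ∑ k ∈ Finset.range p, y ^ k * ι z ^ (p - 1 - k) * ((p - 1).choose k : AlgebraicClosure (ZMod p)) := by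
    intro z
    rw [add_pow, h1]
  rw [Finset.sum_congr rfl (fun z _ => expand z), Finset.sum_comm]
  have hinner : ∀ k ∈ Finset.range p,
      (∑ z : ZMod p, y ^ k * ι z ^ (p - 1 - k) * ((p - 1).choose k : AlgebraicClosure (ZMod p)))
      = if k = 0 then -1 else 0 := by
    intro k hk
    rw [Finset.mem_range] at hk
    have hps : ∀ z : ZMod p, y ^ k * ι z ^ (p - 1 - k) * ((p-1).choose k : AlgebraicClosure (ZMod p))
        = (y ^ k * ((p-1).choose k : AlgebraicClosure (ZMod p))) * ι (z ^ (p - 1 - k)) := by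
      intro z; rw [map_pow]; ring
    rw [Finset.sum_congr rfl (fun z _ => hps z), ← Finset.mul_sum, ← map_sum]
    by_cases hk0 : k = 0
    · subst hk0
      simp only [pow_zero, Nat.choose_zero_right, Nat.cast_one, mul_one, one_mul, Nat.sub_zero,
        if_true]
      rw [zmod_sum_pow, map_neg, map_one]
    · rw [if_neg hk0]
      have hlt : p - 1 - k < Fintype.card (ZMod p) - 1 := by rw [ZMod.card]; omega
      rw [FiniteField.sum_pow_lt_card_sub_one (ZMod p) _ hlt, map_zero, mul_zero]
  rw [Finset.sum_congr rfl hinner, Finset.sum_ite_eq' (Finset.range p) 0 (fun _ => (-1 : AlgebraicClosure (ZMod p)))]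
  rw [if_pos (Finset.mem_range.mpr hp.pos)]

lemma sum_range_shift (y : AlgebraicClosure (ZMod p)) (e : ZMod p) (he : e ≠ 0) :
    ∑ q ∈ Finset.range p, (y + (q : AlgebraicClosure (ZMod p)) * algebraMap (ZMod p) (AlgebraicClosure (ZMod p)) e) ^ (p - 1) = -1 := by
  classical
  have hp : p.Prime := Fact.out
  haveI : NeZero p := ⟨hp.ne_zero⟩
  have hcast : ∀ q : ℕ, (q : AlgebraicClosure (ZMod p)) * algebraMap (ZMod p) (AlgebraicClosure (ZMod p)) e = algebraMap (ZMod p) (AlgebraicClosure (ZMod p)) ((q : ZMod p) * e) := by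
    intro q; rw [map_mul, map_natCast]
  rw [Finset.sum_congr rfl (fun q _ => by rw [hcast])]
  rw [← sum_univ_shift y]
  refine Finset.sum_nbij' (fun q => (q : ZMod p) * e) (fun z => (z * e⁻¹).val) ?_ ?_ ?_ ?_ ?_
  · intro a _; exact Finset.mem_univ _
  · intro z _; exact Finset.mem_range.mpr (ZMod.val_lt _)
  · intro q hq
    rw [Finset.mem_range] at hq
    show ((q : ZMod p) * e * e⁻¹).val = q
    rw [mul_assoc, mul_inv_cancel₀ he, mul_one, ZMod.val_natCast_of_lt hq]
  · intro z _
    show ((((z * e⁻¹).val : ℕ) : ZMod p)) * e = z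
    rw [ZMod.natCast_rightInverse (z * e⁻¹), mul_assoc, inv_mul_cancel₀ he, mul_one]
  · intro q _; rfl
lemma block_pow {K : Type*} [Monoid K] {x : K} {p N : ℕ} (hx : x ^ p ^ N = x) (q r : ℕ) :
    x ^ p ^ (q * N + r) = x ^ p ^ r := by
  have hq : ∀ q : ℕ, x ^ p ^ (q * N) = x := by
    intro q
    induction q with
    | zero => simp
    | succ q ihq =>
      have : (q + 1) * N = q * N + N := by ring
      rw [this, pow_add, pow_mul, ihq, hx]
  rw [pow_add, pow_mul, hq q]

lemma sum_range_mul_split {M : Type*} [AddCommMonoid M] (f : ℕ → M) (Q N : ℕ) :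
    ∑ k ∈ Finset.range (Q * N), f k = ∑ q ∈ Finset.range Q, ∑ r ∈ Finset.range N, f (q * N + r) := by
  induction Q with
  | zero => simp
  | succ Q ih =>
    have : (Q + 1) * N = Q * N + N := by ring
    rw [this, Finset.sum_range_add, ih, Finset.sum_range_succ]

lemma eq_pow_succ_of_dvd_not_dvd {p e i : ℕ} (hp : p.Prime) (h1 : e ∣ p ^ (i + 1))
    (h2 : ¬ e ∣ p ^ i) : e = p ^ (i + 1) := by
  obtain ⟨m, hm, rfl⟩ := (Nat.dvd_prime_pow hp).1 h1
  rcases Nat.lt_or_ge m (i + 1) with hlt | hge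
  · exact absurd (pow_dvd_pow p (by omega : m ≤ i)) h2
  · congr 1; omega
lemma main_induction (c : ℕ → AlgebraicClosure (ZMod p))
    (hc : ∀ i, c i ^ p - c i = (∏ j ∈ Finset.range i, c j) ^ (p - 1)) (i : ℕ) :
    (∀ j < i, (minpoly (ZMod p) (c j)).natDegree = p ^ (j + 1)) ∧
    (minpoly (ZMod p) ((∏ j ∈ Finset.range i, c j) ^ (p - 1))).natDegree = p ^ i ∧
    ∑ k ∈ Finset.range (p ^ i), ((∏ j ∈ Finset.range i, c j) ^ (p - 1)) ^ p ^ k = (-1) ^ i := by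
  have hp : p.Prime := Fact.out
  induction i with
  | zero =>
    refine ⟨fun j hj => absurd hj (Nat.not_lt_zero j), ?_, ?_⟩
    · simp only [Finset.prod_range_zero, one_pow, minpoly.one, pow_zero]
      rw [← Polynomial.C_1, Polynomial.natDegree_X_sub_C]
    · simp
  | succ i ih =>
    obtain ⟨hprev, hAdeg, hT⟩ := ih
    set A : AlgebraicClosure (ZMod p) := (∏ j ∈ Finset.range i, c j) ^ (p - 1) with hA
    set ε : AlgebraicClosure (ZMod p) := (-1) ^ i with hε
    have hεfix : ∀ N : ℕ, ε ^ p ^ N = ε := by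
      intro N
      rw [hε, pow_right_comm, neg_one_pow_char_pow]
    have hεne : ε ≠ 0 := by
      rw [hε]; exact pow_ne_zero _ (neg_ne_zero.mpr one_ne_zero)
    have hεne' : (-1 : AlgebraicClosure (ZMod p)) ^ (i + 1) ≠ 0 :=
      pow_ne_zero _ (neg_ne_zero.mpr one_ne_zero)
    have hnatfix : ∀ (q N : ℕ),
        (q : AlgebraicClosure (ZMod p)) ^ p ^ N = (q : AlgebraicClosure (ZMod p)) := by
      intro q N
      rw [← map_natCast (algebraMap (ZMod p) (AlgebraicClosure (ZMod p))) q, ← map_pow,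
        ZMod.pow_card_pow]
    have hci : c i ^ p = c i + A := by
      have h := hc i
      rw [← hA, sub_eq_iff_eq_add] at h
      rw [h]; ring
    have hφ : ∀ n, c i ^ p ^ n = c i + ∑ k ∈ Finset.range n, A ^ p ^ k := by
      intro n
      induction n with
      | zero => simp
      | succ n ihn =>
        rw [pow_succ, pow_mul, ihn, add_pow_char, hci, sum_pow_char,
          Finset.sum_range_succ' (fun k => A ^ p ^ k) n]
        have hh : ∀ k, (A ^ p ^ k) ^ p = A ^ p ^ (k + 1) := by
          intro k; rw [← pow_mul, ← pow_succ]
        simp only [hh, pow_zero, pow_one]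
        ring
    have hAfix : A ^ p ^ p ^ i = A := (pow_pow_eq_iff A (p ^ i)).mpr (hAdeg ▸ dvd_rfl)
    have hQ : ∀ q : ℕ, c i ^ p ^ (q * p ^ i) = c i + (q : AlgebraicClosure (ZMod p)) * ε := by
      intro q
      induction q with
      | zero => simp
      | succ q ihq =>
        have he : (q + 1) * p ^ i = q * p ^ i + p ^ i := by ring
        rw [he, pow_add, pow_mul, ihq, add_pow_char_pow, hφ (p ^ i), hT, mul_pow, hnatfix, hεfix]
        push_cast
        ring
    have hQR : ∀ q r : ℕ, c i ^ p ^ (q * p ^ i + r)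
        = c i + (∑ k ∈ Finset.range r, A ^ p ^ k) + (q : AlgebraicClosure (ZMod p)) * ε := by
      intro q r
      rw [pow_add, pow_mul, hQ q, add_pow_char_pow, hφ r, mul_pow, hnatfix, hεfix]
    have hsplit : p ^ (i + 1) = p * p ^ i := by rw [pow_succ]; ring
    have hcfixbig : c i ^ p ^ p ^ (i + 1) = c i := by
      have h := hQ p
      rw [← hsplit] at h
      rw [h, CharP.cast_eq_zero (AlgebraicClosure (ZMod p)) p, zero_mul, add_zero]
    have hdegc : (minpoly (ZMod p) (c i)).natDegree = p ^ (i + 1) := by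
      apply eq_pow_succ_of_dvd_not_dvd hp ((pow_pow_eq_iff _ _).mp hcfixbig)
      intro hdvd
      have hfix := (pow_pow_eq_iff (c i) (p ^ i)).mpr hdvd
      rw [hφ (p ^ i), hT] at hfix
      exact hεne (add_eq_left.mp hfix)
    have hA' : (∏ j ∈ Finset.range (i + 1), c j) ^ (p - 1) = A * c i ^ (p - 1) := by
      rw [Finset.prod_range_succ, mul_pow, ← hA]
    have hεmap : ε = algebraMap (ZMod p) (AlgebraicClosure (ZMod p)) ((-1) ^ i : ZMod p) := by
      rw [hε, map_pow, map_neg, map_one]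
    have key : ∀ q r : ℕ, (A * c i ^ (p - 1)) ^ p ^ (q * p ^ i + r)
        = A ^ p ^ r * ((c i + ∑ k ∈ Finset.range r, A ^ p ^ k)
            + (q : AlgebraicClosure (ZMod p))
              * algebraMap (ZMod p) (AlgebraicClosure (ZMod p)) ((-1) ^ i : ZMod p)) ^ (p - 1) := by
      intro q r
      rw [mul_pow, pow_right_comm (c i), hQR q r, block_pow hAfix q r, ← hεmap]
    have hT' : ∑ k ∈ Finset.range (p ^ (i + 1)), (A * c i ^ (p - 1)) ^ p ^ k = (-1) ^ (i + 1) := by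
      rw [hsplit, sum_range_mul_split]
      simp only [key]
      rw [Finset.sum_comm]
      have inner : ∀ r : ℕ, ∑ q ∈ Finset.range p,
          A ^ p ^ r * ((c i + ∑ k ∈ Finset.range r, A ^ p ^ k)
            + (q : AlgebraicClosure (ZMod p))
              * algebraMap (ZMod p) (AlgebraicClosure (ZMod p)) ((-1) ^ i : ZMod p)) ^ (p - 1)
          = - (A ^ p ^ r) := by
        intro r
        rw [← Finset.mul_sum,
          sum_range_shift (c i + ∑ k ∈ Finset.range r, A ^ p ^ k) ((-1) ^ i)
            (pow_ne_zero _ (neg_ne_zero.mpr one_ne_zero)), mul_neg_one]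
      simp only [inner]
      rw [Finset.sum_neg_distrib, hT, hε, pow_succ]
      ring
    have hA'fixbig : (A * c i ^ (p - 1)) ^ p ^ p ^ (i + 1) = A * c i ^ (p - 1) := by
      rw [mul_pow, pow_right_comm (c i), hcfixbig,
        (pow_pow_eq_iff A (p ^ (i + 1))).mpr (by rw [hAdeg]; exact pow_dvd_pow p (Nat.le_succ i))]
    have hdegA' : (minpoly (ZMod p) (A * c i ^ (p - 1))).natDegree = p ^ (i + 1) := by
      apply eq_pow_succ_of_dvd_not_dvd hp ((pow_pow_eq_iff _ _).mp hA'fixbig)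
      intro hdvd
      have hfix := (pow_pow_eq_iff (A * c i ^ (p - 1)) (p ^ i)).mpr hdvd
      have hzero : ∑ k ∈ Finset.range (p ^ (i + 1)), (A * c i ^ (p - 1)) ^ p ^ k = 0 := by
        rw [hsplit, sum_range_mul_split]
        simp only [block_pow hfix]
        rw [Finset.sum_const, Finset.card_range, nsmul_eq_mul,
          CharP.cast_eq_zero (AlgebraicClosure (ZMod p)) p, zero_mul]
      rw [hT'] at hzero
      exact hεne' hzero
    refine ⟨?_, ?_, ?_⟩
    · intro j hj
      rcases Nat.lt_succ_iff_lt_or_eq.mp hj with h | rfl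
      · exact hprev j h
      · exact hdegc
    · rw [hA']; exact hdegA'
    · rw [hA']; exact hT'

theorem degree_c_and_a (p : ℕ) [Fact p.Prime]
    (c : ℕ → AlgebraicClosure (ZMod p))
    (hc : ∀ i, c i ^ p - c i = (∏ j ∈ Finset.range i, c j) ^ (p - 1))
    (i : ℕ) :
    (minpoly (ZMod p) (c i)).natDegree = p ^ (i + 1) ∧
    (minpoly (ZMod p) ((∏ j ∈ Finset.range (i + 1), c j) ^ (p - 1))).natDegree =
      p ^ (i + 1) := by
  obtain ⟨h1, h2, _⟩ := main_induction c hc (i + 1)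
  exact ⟨h1 i (Nat.lt_succ_self i), h2⟩
end
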